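/- arXiv:2205.09873 — 10 statements merged into one kernel-verified Lean document; each statement's English description precedes it below -/
import Mathlib

section
/- Fix k, w, U ≥ 1, hash functions h_r : Fin U → Fin w for r ∈ Fin k, and a frequency function f : Fin U → ℕ, with noise-free Count-Min counters T[r,c] and noise-free estimate f̃. Let σ > 0, β ∈ (0,1), and set E = √2·σ·√(log(4·k·w/β)). Let (η[r,c])_{r ∈ Fin k, c ∈ Fin w} be independent N(0, σ²) random variables, define the noisy counters C[r,c] = T[r,c] + E + η[r,c], and the private Count-Min estimate f̂(x) = min_{r ∈ Fin k} C[r, h_r(x)]. Then with probability at least 1 − β/2 over the noise η, simultaneously for every item x ∈ Fin U, we have 0 ≤ f̂(x) − f̃(x) ≤ 2E. -/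
open MeasureTheory ProbabilityTheory Real

/-!
Off the event that some noise term has `|η p| > E`, every noisy counter lies in
`[T r c, T r c + 2E]`, and taking the minimum over rows moves the estimate by an amount in
`[0, 2E]`. The Gaussian noise is sub-Gaussian with parameter `σ²`, so by the Chernoff bound each
`|η p| > E` has probability at most `2 exp (-E² / 2σ²) = β / (2kw)` for the chosen `E`; a union
bound over the `kw` counters bounds the bad event by `β / 2`.
-/

namespace ProbabilityTheory.HasSubgaussianMGF

open scoped NNReal

variable {Ω : Type*} [MeasurableSpace Ω] {μ : Measure Ω} {c : ℝ≥0}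

lemma of_map_eq_gaussianReal {X : Ω → ℝ} {v : ℝ≥0} (hX : μ.map X = gaussianReal 0 v) :
    HasSubgaussianMGF X v μ where
  integrable_exp_mul t := by
    have hX_meas : AEMeasurable X μ := aemeasurable_of_map_neZero (by rw [hX]; infer_instance)
    have := integrable_exp_mul_gaussianReal (μ := 0) (v := v) t
    rwa [← hX, integrable_map_measure (by fun_prop) hX_meas] at this
  mgf_le t := by
    rw [mgf_gaussianReal hX, zero_mul, zero_add]

variable [IsFiniteMeasure μ]

lemma measureReal_lt_abs_le {X : Ω → ℝ} (h : HasSubgaussianMGF X c μ) {ε : ℝ} (hε : 0 ≤ ε) :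
    μ.real {ω | ε < |X ω|} ≤ 2 * exp (-ε ^ 2 / (2 * c)) := by
  have hsplit : {ω | ε < |X ω|} ⊆ {ω | ε ≤ X ω} ∪ {ω | ε ≤ (-X) ω} := by
    intro ω hω
    rcases le_or_gt 0 (X ω) with hX | hX
    · left; simp only [Set.mem_ofPred_eq, abs_of_nonneg hX] at hω ⊢; exact hω.le
    · right; simp only [Set.mem_ofPred_eq, abs_of_neg hX, Pi.neg_apply] at hω ⊢; exact hω.le
  calc μ.real {ω | ε < |X ω|}
      ≤ μ.real {ω | ε ≤ X ω} + μ.real {ω | ε ≤ (-X) ω} :=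
        (measureReal_mono hsplit).trans (measureReal_union_le _ _)
    _ ≤ exp (-ε ^ 2 / (2 * c)) + exp (-ε ^ 2 / (2 * c)) :=
        add_le_add (h.measure_ge_le hε) (h.neg.measure_ge_le hε)
    _ = 2 * exp (-ε ^ 2 / (2 * c)) := (two_mul _).symm

lemma measureReal_exists_lt_abs_le {ι : Type*} [Fintype ι] {X : ι → Ω → ℝ}
    (h : ∀ i, HasSubgaussianMGF (X i) c μ) {ε : ℝ} (hε : 0 ≤ ε) :
    μ.real {ω | ∃ i, ε < |X i ω|} ≤ Fintype.card ι * (2 * exp (-ε ^ 2 / (2 * c))) := by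
  rw [Set.ofPred_exists]
  calc μ.real (⋃ i, {ω | ε < |X i ω|})
      ≤ ∑ i, μ.real {ω | ε < |X i ω|} := measureReal_iUnion_fintype_le _
    _ ≤ ∑ _i : ι, 2 * exp (-ε ^ 2 / (2 * c)) :=
        Finset.sum_le_sum fun i _ => (h i).measureReal_lt_abs_le hε
    _ = Fintype.card ι * (2 * exp (-ε ^ 2 / (2 * c))) := by
        rw [Finset.sum_const, Finset.card_univ, nsmul_eq_mul]

end ProbabilityTheory.HasSubgaussianMGF

lemma exp_neg_sq_div_eq_inv {σ a : ℝ} (hσ : σ ≠ 0) (ha : 1 ≤ a) :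
    exp (-(√2 * σ * √(log a)) ^ 2 / (2 * σ ^ 2)) = a⁻¹ := by
  rw [mul_pow, mul_pow, sq_sqrt zero_le_two, sq_sqrt (log_nonneg ha),
    show -(2 * σ ^ 2 * log a) / (2 * σ ^ 2) = -log a by field_simp, exp_neg,
    exp_log (by linarith)]

lemma ciInf_sub_ciInf_mem_Icc {ι : Type*} [Finite ι] [Nonempty ι] {a b : ι → ℝ} {δ : ℝ}
    (h : ∀ i, b i - a i ∈ Set.Icc 0 δ) : (⨅ i, b i) - ⨅ i, a i ∈ Set.Icc 0 δ := by
  have hle : ∀ i, a i ≤ b i := fun i => sub_nonneg.mp (h i).1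
  obtain ⟨i₀, hi₀⟩ := exists_eq_ciInf_of_finite (f := a)
  refine ⟨sub_nonneg.mpr (ciInf_mono (Set.finite_range a).bddBelow hle), ?_⟩
  calc (⨅ i, b i) - ⨅ i, a i ≤ b i₀ - a i₀ := by
        rw [hi₀]; exact sub_le_sub_right (ciInf_le (Set.finite_range b).bddBelow i₀) _
    _ ≤ δ := (h i₀).2

theorem stmt1_general {Ω : Type*} [MeasurableSpace Ω] (P : Measure Ω) [IsProbabilityMeasure P]
    (k w U : ℕ) (hk : 1 ≤ k) (hw : 1 ≤ w)
    (h : Fin k → Fin U → Fin w)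
    (σ β : ℝ) (hσ : 0 < σ) (hβ : β ∈ Set.Ioo (0 : ℝ) 1)
    (E : ℝ) (hE : E = Real.sqrt 2 * σ * Real.sqrt (Real.log (4 * k * w / β)))
    (η : Fin k × Fin w → Ω → ℝ)
    (hdist : ∀ p, Measure.map (η p) P = gaussianReal 0 ⟨σ ^ 2, sq_nonneg σ⟩)
    (T : Fin k → Fin w → ℝ)
    (ftilde : Fin U → ℝ)
    (hft : ∀ x, ftilde x = ⨅ r : Fin k, T r (h r x))
    (C : Fin k → Fin w → Ω → ℝ)
    (hC : ∀ r c ω, C r c ω = T r c + E + η (r, c) ω)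
    (fhat : Fin U → Ω → ℝ)
    (hfh : ∀ x ω, fhat x ω = ⨅ r : Fin k, C r (h r x) ω) :
    ENNReal.ofReal (1 - β / 2) ≤
      P {ω | ∀ x, 0 ≤ fhat x ω - ftilde x ∧ fhat x ω - ftilde x ≤ 2 * E} := by
  obtain ⟨hβ0, hβ1⟩ := hβ
  have hk0 : (0 : ℝ) < k := by exact_mod_cast hk
  have hw0 : (0 : ℝ) < w := by exact_mod_cast hw
  have harg : 1 ≤ 4 * k * w / β := by
    rw [le_div_iff₀ hβ0]
    nlinarith [show (1 : ℝ) ≤ k by exact_mod_cast hk, show (1 : ℝ) ≤ w by exact_mod_cast hw]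
  have hE0 : 0 ≤ E := hE ▸ by positivity
  set Bad := {ω | ∃ p, E < |η p ω|}
  have hBad : P.real Bad ≤ β / 2 :=
    calc P.real Bad ≤ Fintype.card (Fin k × Fin w) * (2 * exp (-E ^ 2 / (2 * σ ^ 2))) :=
          HasSubgaussianMGF.measureReal_exists_lt_abs_le
            (fun p => .of_map_eq_gaussianReal (hdist p)) hE0
      _ = β / 2 := by
          rw [hE, exp_neg_sq_div_eq_inv hσ.ne' harg, Fintype.card_prod, Fintype.card_fin,
            Fintype.card_fin]
          push_cast
          field_simp
          ring
  have hGood : Badᶜ ⊆ {ω | ∀ x, 0 ≤ fhat x ω - ftilde x ∧ fhat x ω - ftilde x ≤ 2 * E} := by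
    intro ω hω x
    have : Nonempty (Fin k) := ⟨⟨0, hk⟩⟩
    rw [hfh, hft]
    refine ciInf_sub_ciInf_mem_Icc fun r => ?_
    have hη := abs_le.mp (not_lt.mp fun hlt => hω ⟨(r, h r x), hlt⟩)
    rw [hC]
    constructor <;> linarith
  have hcover : 1 ≤ P.real Badᶜ + P.real Bad := by
    simpa using measureReal_union_le (μ := P) Badᶜ Bad
  refine ENNReal.ofReal_le_of_le_toReal ?_
  calc 1 - β / 2 ≤ P.real Badᶜ := by linarith
    _ ≤ _ := measureReal_mono hGood

/-- Private Count-Min with shifted Gaussian noise `E + N(0,σ²)` added to each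
counter: with probability at least `1 - β/2` over the noise, simultaneously for every item `x`,
`0 ≤ f̂(x) - f̃(x) ≤ 2E`, where `E = √2·σ·√(log(4kw/β))`. -/
theorem stmt1 {Ω : Type*} [MeasurableSpace Ω] (P : Measure Ω) [IsProbabilityMeasure P]
    (k w U : ℕ) (hk : 1 ≤ k) (hw : 1 ≤ w) (hU : 1 ≤ U)
    (h : Fin k → Fin U → Fin w) (f : Fin U → ℕ)
    (σ β : ℝ) (hσ : 0 < σ) (hβ : β ∈ Set.Ioo (0 : ℝ) 1)
    (E : ℝ) (hE : E = Real.sqrt 2 * σ * Real.sqrt (Real.log (4 * k * w / β)))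
    (η : Fin k × Fin w → Ω → ℝ)
    (hmeas : ∀ p, Measurable (η p))
    (hindep : iIndepFun η P)
    (hdist : ∀ p, Measure.map (η p) P = gaussianReal 0 ⟨σ ^ 2, sq_nonneg σ⟩)
    (T : Fin k → Fin w → ℝ)
    (hT : ∀ r c, T r c = ∑ y ∈ Finset.univ.filter (fun y => h r y = c), (f y : ℝ))
    (ftilde : Fin U → ℝ)
    (hft : ∀ x, ftilde x = ⨅ r : Fin k, T r (h r x))
    (C : Fin k → Fin w → Ω → ℝ)
    (hC : ∀ r c ω, C r c ω = T r c + E + η (r, c) ω)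
    (fhat : Fin U → Ω → ℝ)
    (hfh : ∀ x ω, fhat x ω = ⨅ r : Fin k, C r (h r x) ω) :
    ENNReal.ofReal (1 - β / 2) ≤
      P {ω | ∀ x, 0 ≤ fhat x ω - ftilde x ∧ fhat x ω - ftilde x ≤ 2 * E} :=
  stmt1_general P k w U hk hw h σ β hσ hβ E hE η hdist T ftilde hft C hC fhat hfh
end

section
/- Fix U, w ≥ 1, an odd number of rows k = 2m+1, hash functions h_r : Fin U → Fin w and sign functions g_r : Fin U → {−1,+1} for r ∈ Fin k, and a frequency function f : Fin U → ℕ, with noise-free CountSketch counters T[r,c] and noise-free estimate f̃. Let σ > 0, β ∈ (0,1), and set E = √2·σ·√(log(4·k·w/β)). Let (η[r,c])_{r ∈ Fin k, c ∈ Fin w} be independent N(0, σ²) random variables, define the noisy counters C[r,c] = T[r,c] + η[r,c], and the private CountSketch estimate f̂(x) = median_{r ∈ Fin k} g_r(x)·C[r, h_r(x)]. Then with probability at least 1 − β/2 over the noise η, simultaneously for every item x ∈ Fin U, we have |f̂(x) − f̃(x)| ≤ E. -/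
open MeasureTheory ProbabilityTheory Real

/-!
On the event that every noise variable satisfies `|η[r,c]| ≤ E`, each row estimate
`g_r(x)·C[r,h_r(x)]` lies within `E` of its noise-free value, since `|g_r(x)| = 1`. The median
is monotone and commutes with adding constants, hence is 1-Lipschitz for the sup distance, so
`|f̂(x) - f̃(x)| ≤ E` for all `x` at once. A centred Gaussian of variance `σ²` is
`σ²`-sub-Gaussian, so by the Chernoff bound `P(|η| > E) ≤ 2·exp(-E²/2σ²) = β/(2kw)` for the
chosen `E`, and a union bound over the `kw` counters bounds the failure probability by `β/2`.
-/

/-- The median of a tuple of `2m+1` reals: its `(m+1)`-st smallest entry with multiplicity. -/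
noncomputable def median {m : ℕ} (a : Fin (2 * m + 1) → ℝ) : ℝ :=
  (Multiset.sort (Multiset.map a Finset.univ.val) (· ≤ ·))[m]'(by
    simp [Multiset.length_sort]; omega)

theorem List.SortedLE.getElem_le_iff_lt_countP {α : Type*} [LinearOrder α] {l : List α}
    (hl : l.SortedLE) {i : ℕ} (hi : i < l.length) (v : α) :
    l[i] ≤ v ↔ i < l.countP (· ≤ v) := by
  have hsplit (n : ℕ) :
      l.countP (· ≤ v) = (l.take n).countP (· ≤ v) + (l.drop n).countP (· ≤ v) := by
    rw [← List.countP_append, List.take_append_drop]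
  constructor
  · intro hiv
    have hprefix : (l.take (i + 1)).countP (· ≤ v) = i + 1 := by
      rw [List.countP_eq_length.2, List.length_take]
      · omega
      intro a ha
      obtain ⟨j, hj, rfl⟩ := List.getElem_of_mem ha
      rw [List.length_take] at hj
      rw [List.getElem_take, decide_eq_true_eq]
      exact (hl.getElem_le_getElem_of_le (by omega)).trans hiv
    have := hsplit (i + 1)
    omega
  · intro hcount
    by_contra! hvi
    have hsuffix : (l.drop i).countP (· ≤ v) = 0 := by
      rw [List.countP_eq_zero]
      intro a ha
      obtain ⟨j, hj, rfl⟩ := List.getElem_of_mem ha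
      rw [List.length_drop] at hj
      rw [List.getElem_drop, decide_eq_true_eq, not_le]
      exact hvi.trans_le (hl.getElem_le_getElem_of_le (by omega))
    have hprefix := (l.take i).countP_le_length (p := (· ≤ v))
    rw [List.length_take] at hprefix
    have := hsplit i
    omega

section Median

variable {m : ℕ}

theorem median_le_iff (a : Fin (2 * m + 1) → ℝ) (v : ℝ) :
    median a ≤ v ↔ m < (Finset.univ.filter fun r => a r ≤ v).card := by
  have hcount : (Multiset.sort (Multiset.map a Finset.univ.val) (· ≤ ·)).countP (· ≤ v)
      = (Finset.univ.filter fun r => a r ≤ v).card := by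
    rw [← Multiset.coe_countP, Multiset.sort_eq, Multiset.countP_map]
    rfl
  rw [median, (Multiset.pairwise_sort _ _).sortedLE.getElem_le_iff_lt_countP, hcount]

theorem median_mono {a b : Fin (2 * m + 1) → ℝ} (hab : a ≤ b) : median a ≤ median b := by
  rw [median_le_iff]
  refine ((median_le_iff b _).1 le_rfl).trans_le (Finset.card_le_card fun r hr => ?_)
  simp only [Finset.mem_filter, Finset.mem_univ, true_and] at hr ⊢
  exact (hab r).trans hr

theorem median_add_const (a : Fin (2 * m + 1) → ℝ) (c : ℝ) :
    median (fun r => a r + c) = median a + c := by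
  refine eq_of_forall_ge_iff fun v => ?_
  simp only [median_le_iff, ← le_sub_iff_add_le]

theorem abs_median_sub_median_le {a b : Fin (2 * m + 1) → ℝ} {ε : ℝ}
    (hab : ∀ r, |a r - b r| ≤ ε) : |median a - median b| ≤ ε := by
  have hle {a b : Fin (2 * m + 1) → ℝ} (hab : ∀ r, |a r - b r| ≤ ε) :
      median a ≤ median b + ε := by
    rw [← median_add_const]
    exact median_mono fun r => by linarith [(abs_sub_le_iff.1 (hab r)).1]
  rw [abs_sub_le_iff]
  constructor
  · linarith [hle hab]
  · linarith [hle fun r => (abs_sub_comm (b r) (a r)).trans_le (hab r)]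

end Median

section Subgaussian

variable {Ω : Type*} {mΩ : MeasurableSpace Ω} {μ : Measure Ω}

theorem hasSubgaussianMGF_of_map_eq_gaussianReal {X : Ω → ℝ} {v : NNReal}
    (hX : μ.map X = gaussianReal 0 v) : HasSubgaussianMGF X v μ := by
  have hXm : AEMeasurable X μ := aemeasurable_of_map_neZero (by rw [hX]; infer_instance)
  refine (HasSubgaussianMGF.id_map_iff hXm).1
    (hX ▸ ⟨integrable_exp_mul_gaussianReal, fun t => ?_⟩)
  simp [mgf_id_gaussianReal]

theorem ProbabilityTheory.HasSubgaussianMGF.measureReal_lt_abs_le_s2 [IsFiniteMeasure μ]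
    {X : Ω → ℝ} {c : NNReal} (h : HasSubgaussianMGF X c μ) {ε : ℝ} (hε : 0 ≤ ε) :
    μ.real {ω | ε < |X ω|} ≤ 2 * exp (-ε ^ 2 / (2 * c)) := by
  calc μ.real {ω | ε < |X ω|}
      ≤ μ.real ({ω | ε ≤ X ω} ∪ {ω | ε ≤ (-X) ω}) := by
        refine measureReal_mono fun ω (hω : ε < |X ω|) => ?_
        rcases lt_abs.1 hω with hpos | hneg
        exacts [Or.inl hpos.le, Or.inr hneg.le]
    _ ≤ μ.real {ω | ε ≤ X ω} + μ.real {ω | ε ≤ (-X) ω} := measureReal_union_le _ _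
    _ ≤ 2 * exp (-ε ^ 2 / (2 * c)) := by
        linarith [h.measure_ge_le hε, h.neg.measure_ge_le hε]

theorem one_sub_card_mul_le_measureReal_forall_abs_le [IsProbabilityMeasure μ] {ι : Type*}
    [Fintype ι] {X : ι → Ω → ℝ} {c : NNReal} (h : ∀ i, HasSubgaussianMGF (X i) c μ) {ε : ℝ}
    (hε : 0 ≤ ε) :
    1 - Fintype.card ι * (2 * exp (-ε ^ 2 / (2 * c))) ≤ μ.real {ω | ∀ i, |X i ω| ≤ ε} := by
  set S := {ω | ∀ i, |X i ω| ≤ ε}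
  have hcompl : Sᶜ = ⋃ i, {ω | ε < |X i ω|} := by
    ext ω
    simp [S]
  have hunion : μ.real Sᶜ ≤ Fintype.card ι * (2 * exp (-ε ^ 2 / (2 * c))) := by
    rw [hcompl]
    refine (measureReal_iUnion_fintype_le _).trans ?_
    refine (Finset.sum_le_sum fun i _ => (h i).measureReal_lt_abs_le_s2 hε).trans_eq ?_
    rw [Finset.sum_const, Finset.card_univ, nsmul_eq_mul]
  have htotal : 1 ≤ μ.real S + μ.real Sᶜ := by
    simpa [Set.union_compl_self] using measureReal_union_le (μ := μ) S Sᶜ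
  linarith

end Subgaussian

theorem exp_neg_sq_div_two_mul_sq_eq_inv {σ L E : ℝ} (hσ : σ ≠ 0) (hL : 1 ≤ L)
    (hE : E = √2 * σ * √(log L)) : exp (-E ^ 2 / (2 * σ ^ 2)) = L⁻¹ := by
  have hE2 : E ^ 2 = 2 * σ ^ 2 * log L := by
    rw [hE, mul_pow, mul_pow, sq_sqrt zero_le_two, sq_sqrt (log_nonneg hL)]
  rw [hE2, show -(2 * σ ^ 2 * log L) / (2 * σ ^ 2) = -log L by field_simp, exp_neg,
    exp_log (by linarith)]

theorem stmt2_general {Ω : Type*} [MeasurableSpace Ω] (P : Measure Ω) [IsProbabilityMeasure P]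
    (m w U : ℕ) (hw : 1 ≤ w)
    (h : Fin (2 * m + 1) → Fin U → Fin w) (g : Fin (2 * m + 1) → Fin U → ℝ)
    (hg : ∀ r y, g r y = 1 ∨ g r y = -1)
    (σ β : ℝ) (hσ : 0 < σ) (hβ : β ∈ Set.Ioo (0 : ℝ) 1)
    (E : ℝ) (hE : E = Real.sqrt 2 * σ * Real.sqrt (Real.log (4 * (2 * m + 1) * w / β)))
    (η : Fin (2 * m + 1) × Fin w → Ω → ℝ)
    (hdist : ∀ p, Measure.map (η p) P = gaussianReal 0 ⟨σ ^ 2, sq_nonneg σ⟩)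
    (T : Fin (2 * m + 1) → Fin w → ℝ)
    (ftilde : Fin U → ℝ)
    (hft : ∀ x, ftilde x = median (fun r => g r x * T r (h r x)))
    (C : Fin (2 * m + 1) → Fin w → Ω → ℝ)
    (hC : ∀ r c ω, C r c ω = T r c + η (r, c) ω)
    (fhat : Fin U → Ω → ℝ)
    (hfh : ∀ x ω, fhat x ω = median (fun r => g r x * C r (h r x) ω)) :
    ENNReal.ofReal (1 - β / 2) ≤
      P {ω | ∀ x, |fhat x ω - ftilde x| ≤ E} := by
  obtain ⟨hβ0, hβ1⟩ := hβ
  have hkw : (1 : ℝ) ≤ (2 * m + 1) * w :=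
    one_le_mul_of_one_le_of_one_le (by linarith [m.cast_nonneg (α := ℝ)]) (by exact_mod_cast hw)
  have hL : 1 ≤ 4 * (2 * m + 1) * w / β := by
    rw [le_div_iff₀ hβ0]
    linarith
  have hfailure : Fintype.card (Fin (2 * m + 1) × Fin w) * (2 * exp (-E ^ 2 / (2 * σ ^ 2))) =
      β / 2 := by
    rw [exp_neg_sq_div_two_mul_sq_eq_inv hσ.ne' hL hE, Fintype.card_prod, Fintype.card_fin,
      Fintype.card_fin]
    push_cast
    field_simp
    ring
  have hgood : 1 - β / 2 ≤ P.real {ω | ∀ p, |η p ω| ≤ E} := by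
    rw [← hfailure]
    exact one_sub_card_mul_le_measureReal_forall_abs_le
      (fun p => hasSubgaussianMGF_of_map_eq_gaussianReal (hdist p)) (hE ▸ by positivity)
  have hsub : {ω | ∀ p, |η p ω| ≤ E} ⊆ {ω | ∀ x, |fhat x ω - ftilde x| ≤ E} := by
    intro ω hω x
    rw [hfh, hft]
    refine abs_median_sub_median_le fun r => ?_
    rw [hC, mul_add, add_sub_cancel_left, abs_mul, (abs_eq zero_le_one).2 (hg r x), one_mul]
    exact hω _
  calc ENNReal.ofReal (1 - β / 2) ≤ ENNReal.ofReal (P.real {ω | ∀ p, |η p ω| ≤ E}) :=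
        ENNReal.ofReal_le_ofReal hgood
    _ = P {ω | ∀ p, |η p ω| ≤ E} := ofReal_measureReal
    _ ≤ P {ω | ∀ x, |fhat x ω - ftilde x| ≤ E} := measure_mono hsub

/-- Private CountSketch with Gaussian noise `N(0,σ²)` added to each counter:
with probability at least `1 - β/2` over the noise, simultaneously for every item `x`,
`|f̂(x) - f̃(x)| ≤ E`, where `E = √2·σ·√(log(4kw/β))` and `k = 2m+1`. -/
theorem stmt2 {Ω : Type*} [MeasurableSpace Ω] (P : Measure Ω) [IsProbabilityMeasure P]
    (m w U : ℕ) (hw : 1 ≤ w) (hU : 1 ≤ U)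
    (h : Fin (2 * m + 1) → Fin U → Fin w) (g : Fin (2 * m + 1) → Fin U → ℝ)
    (hg : ∀ r y, g r y = 1 ∨ g r y = -1) (f : Fin U → ℕ)
    (σ β : ℝ) (hσ : 0 < σ) (hβ : β ∈ Set.Ioo (0 : ℝ) 1)
    (E : ℝ) (hE : E = Real.sqrt 2 * σ * Real.sqrt (Real.log (4 * (2 * m + 1) * w / β)))
    (η : Fin (2 * m + 1) × Fin w → Ω → ℝ)
    (hmeas : ∀ p, Measurable (η p))
    (hindep : iIndepFun η P)
    (hdist : ∀ p, Measure.map (η p) P = gaussianReal 0 ⟨σ ^ 2, sq_nonneg σ⟩)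
    (T : Fin (2 * m + 1) → Fin w → ℝ)
    (hT : ∀ r c, T r c = ∑ y ∈ Finset.univ.filter (fun y => h r y = c), g r y * (f y : ℝ))
    (ftilde : Fin U → ℝ)
    (hft : ∀ x, ftilde x = median (fun r => g r x * T r (h r x)))
    (C : Fin (2 * m + 1) → Fin w → Ω → ℝ)
    (hC : ∀ r c ω, C r c ω = T r c + η (r, c) ω)
    (fhat : Fin U → Ω → ℝ)
    (hfh : ∀ x ω, fhat x ω = median (fun r => g r x * C r (h r x) ω)) :
    ENNReal.ofReal (1 - β / 2) ≤
      P {ω | ∀ x, |fhat x ω - ftilde x| ≤ E} :=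
  stmt2_general P m w U hw h g hg σ β hσ hβ E hE η hdist T ftilde hft C hC fhat hfh
end

section
/- Let U, w ≥ 1, let k = 2m+1 be odd, let f : Fin U → ℤ, let σ ≥ 0, and fix an item x ∈ Fin U. Suppose the random variables (h_r(y))_{r ∈ Fin k, y ∈ Fin U} are i.i.d. uniform on Fin w, the random variables (g_r(y))_{r ∈ Fin k, y ∈ Fin U} are i.i.d. uniform on {−1,+1}, the random variables (η[r,c])_{r ∈ Fin k, c ∈ Fin w} are i.i.d. N(0, σ²), and these three families are mutually independent. Define the private CountSketch estimate f̂(x) = median_{r ∈ Fin k} g_r(x)·( Σ_{y ∈ Fin U} f(y)·g_r(y)·1{h_r(y) = h_r(x)} + η[r, h_r(x)] ). Then E[f̂(x)] = f(x); i.e., the private CountSketch frequency estimate is unbiased. -/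
/-!
Negating the signs `g_r(x)` of the queried item preserves the joint law of all the random
variables: the family stays independent and the law of each sign is symmetric. Since
`g_r(x)² = 1`, this substitution turns every row estimate `e_r` into `2 f(x) - e_r`, and the
median commutes with the decreasing map `t ↦ 2 f(x) - t`; so `f̂` and `2 f(x) - f̂` have the
same law. As `f̂` is integrable (it is dominated by `∑ |f| + ∑ |η|`), `E f̂ = f(x)`.
-/

open MeasureTheory ProbabilityTheory Real
open scoped ENNReal NNReal

/-- Index type for the random variables of a private CountSketch with `k` rows, universe size
`U` and `w` columns: hash values `h_r(y)`, sign values `g_r(y)` and noise values `η[r,c]`. -/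
inductive CSIdx (k U w : ℕ) : Type
  | hash : Fin k → Fin U → CSIdx k U w
  | sign : Fin k → Fin U → CSIdx k U w
  | noise : Fin k → Fin w → CSIdx k U w

/-- Codomain of each random variable: hash values live in `Fin w`, signs and noises in `ℝ`. -/
def CSIdx.codomain {k U w : ℕ} : CSIdx k U w → Type
  | .hash _ _ => Fin w
  | .sign _ _ => ℝ
  | .noise _ _ => ℝ

instance {k U w : ℕ} (i : CSIdx k U w) : MeasurableSpace i.codomain :=
  match i with
  | .hash _ _ => inferInstanceAs (MeasurableSpace (Fin w))
  | .sign _ _ => inferInstanceAs (MeasurableSpace ℝ)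
  | .noise _ _ => inferInstanceAs (MeasurableSpace ℝ)

/-- The combined family of random variables of a private CountSketch. -/
def CSVars {Ω : Type*} {k U w : ℕ} (h : Fin k → Fin U → Ω → Fin w)
    (g : Fin k → Fin U → Ω → ℝ) (η : Fin k → Fin w → Ω → ℝ) :
    ∀ i : CSIdx k U w, Ω → i.codomain
  | .hash r y => h r y
  | .sign r y => g r y
  | .noise r c => η r c

section Median

variable {m : ℕ}

theorem median_eq_of_monotone (a : Fin (2 * m + 1) → ℝ) (τ : Equiv.Perm (Fin (2 * m + 1)))
    (hτ : Monotone (a ∘ τ)) : median a = a (τ ⟨m, by omega⟩) := by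
  have hsort :
      Multiset.sort (Multiset.map a Finset.univ.val) (· ≤ ·) = List.ofFn (a ∘ τ) := by
    refine List.Perm.eq_of_pairwise' (Multiset.pairwise_sort _ _)
      (List.sortedLE_iff_pairwise.1 (List.sortedLE_ofFn_iff.2 hτ)) ?_
    rw [← Multiset.coe_eq_coe, Multiset.sort_eq, ← Fin.univ_val_map, ← Multiset.map_map,
      Multiset.map_univ_val_equiv]
  simp only [median, hsort, List.getElem_ofFn, Function.comp_apply]

theorem median_eq_of_antitone (a : Fin (2 * m + 1) → ℝ) (τ : Equiv.Perm (Fin (2 * m + 1)))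
    (hτ : Antitone (a ∘ τ)) : median a = a (τ ⟨m, by omega⟩) := by
  rw [median_eq_of_monotone a (Fin.revPerm.trans τ) fun i j hij => hτ (Fin.rev_le_rev.2 hij)]
  have hmid : Fin.rev (⟨m, by omega⟩ : Fin (2 * m + 1)) = ⟨m, by omega⟩ :=
    Fin.ext (by simp; omega)
  simp only [Equiv.trans_apply, Fin.revPerm_apply, hmid]

theorem exists_median_eq (a : Fin (2 * m + 1) → ℝ) : ∃ i, median a = a i :=
  ⟨_, median_eq_of_monotone a _ (Tuple.monotone_sort a)⟩

theorem abs_median_le_sum_abs (a : Fin (2 * m + 1) → ℝ) : |median a| ≤ ∑ i, |a i| := by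
  obtain ⟨i, hi⟩ := exists_median_eq a
  rw [hi]
  exact Finset.single_le_sum (f := fun i => |a i|) (fun _ _ => abs_nonneg _) (Finset.mem_univ i)

theorem median_const_sub (c : ℝ) (a : Fin (2 * m + 1) → ℝ) :
    median (fun i => c - a i) = c - median a := by
  have hτ := Tuple.monotone_sort a
  rw [median_eq_of_monotone a _ hτ, median_eq_of_antitone (fun i => c - a i) (Tuple.sort a)
    fun i j hij => sub_le_sub_left (hτ hij) c]

theorem median_eq_inf'_sup' (a : Fin (2 * m + 1) → ℝ) :
    median a = Finset.univ.inf' ⟨Fin.castLEEmb (by omega), Finset.mem_univ _⟩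
      fun e : Fin (m + 1) ↪ Fin (2 * m + 1) =>
        Finset.univ.sup' Finset.univ_nonempty (a ∘ e) := by
  set τ := Tuple.sort a
  have hτ : Monotone (a ∘ τ) := Tuple.monotone_sort a
  rw [median_eq_of_monotone a τ hτ]
  apply le_antisymm
  · refine Finset.le_inf' _ _ fun e _ => ?_
    -- pigeonhole: the `m + 1` sorted positions `τ⁻¹ (e i)` cannot all lie below `m`
    by_contra! hlt
    have hsmall : ∀ i, (τ.symm (e i) : ℕ) < m := fun i => by
      by_contra! hle
      have := hτ (show (⟨m, by omega⟩ : Fin (2 * m + 1)) ≤ τ.symm (e i) from hle)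
      simp only [Function.comp_apply, Equiv.apply_symm_apply] at this
      exact (Finset.sup'_lt_iff _).1 hlt i (Finset.mem_univ _) |>.not_ge this
    have := Fintype.card_le_of_injective (fun i => (⟨_, hsmall i⟩ : Fin m))
      fun i j hij => e.injective (τ.symm.injective (Fin.ext (Fin.mk.inj hij)))
    simp at this
  · refine (Finset.inf'_le _ (Finset.mem_univ ((Fin.castLEEmb (by omega)).trans
      τ.toEmbedding))).trans (Finset.sup'_le _ _ fun i _ => hτ ?_)
    exact Fin.mk_le_mk.2 (Nat.lt_succ_iff.1 i.2)

theorem continuous_median : Continuous (median : (Fin (2 * m + 1) → ℝ) → ℝ) := by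
  simp_rw [funext median_eq_inf'_sup']
  exact Continuous.finset_inf'_apply _ fun e _ =>
    Continuous.finset_sup'_apply _ fun i _ => continuous_apply (e i)

end Median

section Distributions

variable {Ω : Type*} [MeasurableSpace Ω] {P : Measure Ω}

theorem identDistrib_pi_of_iIndepFun [IsProbabilityMeasure P] {ι : Type*} [Finite ι]
    {β : ι → Type*} [∀ i, MeasurableSpace (β i)] {X Y : ∀ i, Ω → β i}
    (hX : ∀ i, AEMeasurable (X i) P) (hY : ∀ i, AEMeasurable (Y i) P)
    (hXi : iIndepFun X P) (hYi : iIndepFun Y P) (hXY : ∀ i, P.map (X i) = P.map (Y i)) :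
    IdentDistrib (fun ω i => X i ω) (fun ω i => Y i ω) P P where
  aemeasurable_fst := aemeasurable_pi_lambda _ hX
  aemeasurable_snd := aemeasurable_pi_lambda _ hY
  map_eq := by
    have := Fintype.ofFinite ι
    rw [hXi.map_fun_eq_pi_map hX, hYi.map_fun_eq_pi_map hY, funext hXY]

theorem map_neg_rademacher :
    ((2 : ℝ≥0∞)⁻¹ • (Measure.dirac (1 : ℝ) + Measure.dirac (-1))).map Neg.neg
      = (2 : ℝ≥0∞)⁻¹ • (Measure.dirac (1 : ℝ) + Measure.dirac (-1)) := by
  rw [Measure.map_smul, Measure.map_add _ _ measurable_neg, Measure.map_dirac' measurable_neg,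
    Measure.map_dirac' measurable_neg, neg_neg, add_comm]

theorem ae_eq_one_or_eq_neg_one_of_map_eq_rademacher {X : Ω → ℝ} (hX : AEMeasurable X P)
    (hXP : P.map X = (2 : ℝ≥0∞)⁻¹ • (Measure.dirac 1 + Measure.dirac (-1))) :
    ∀ᵐ ω ∂P, X ω = 1 ∨ X ω = -1 := by
  refine ae_of_ae_map (p := fun t => t = 1 ∨ t = -1) hX ?_
  have hmeas : MeasurableSet {t : ℝ | t = 1 ∨ t = -1} :=
    (measurableSet_singleton 1).union (measurableSet_singleton (-1))
  rw [hXP]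
  exact Measure.ae_smul_measure (ae_add_measure_iff.2
    ⟨(ae_dirac_iff hmeas).2 (by norm_num), (ae_dirac_iff hmeas).2 (by norm_num)⟩) _

theorem integrable_of_map_eq_gaussianReal {X : Ω → ℝ} (hX : AEMeasurable X P)
    {μ : ℝ} {v : ℝ≥0} (hXP : P.map X = gaussianReal μ v) : Integrable X P := by
  have : Integrable id (P.map X) := hXP ▸ memLp_one_iff_integrable.1 (memLp_id_gaussianReal 1)
  exact this.comp_aemeasurable hX

end Distributions

namespace CSIdx

variable {k U w : ℕ}

instance : Finite (CSIdx k U w) :=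
  Finite.of_surjective (fun s : (Fin k × Fin U) ⊕ (Fin k × Fin U) ⊕ (Fin k × Fin w) =>
      s.elim (fun p => hash p.1 p.2) (Sum.elim (fun p => sign p.1 p.2) fun p => noise p.1 p.2))
    fun i => by
      cases i with
      | hash r y => exact ⟨.inl (r, y), rfl⟩
      | sign r y => exact ⟨.inr (.inl (r, y)), rfl⟩
      | noise r c => exact ⟨.inr (.inr (r, c)), rfl⟩

def flipSign (x : Fin U) : (i : CSIdx k U w) → i.codomain → i.codomain
  | .hash _ _ => id
  | .sign _ y => fun t : ℝ => if y = x then -t else t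
  | .noise _ _ => id

theorem measurable_flipSign (x : Fin U) (i : CSIdx k U w) : Measurable (flipSign x i) := by
  cases i with
  | hash => exact measurable_id
  | sign r y => exact (measurable_id.neg.ite (.const (y = x)) measurable_id :
      Measurable fun t : ℝ => if y = x then -t else t)
  | noise => exact measurable_id

end CSIdx

section RowEstimate

variable {k U w : ℕ} (f : Fin U → ℤ) (x : Fin U) (h : Fin k → Fin U → Fin w)
  (g : Fin k → Fin U → ℝ) (η : Fin k → Fin w → ℝ) (r : Fin k)

noncomputable def rowEstimate : ℝ :=
  g r x * ((∑ y, (f y : ℝ) * g r y * (if h r y = h r x then 1 else 0)) + η r (h r x))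

theorem rowEstimate_flipSign (hx : g r x ^ 2 = 1) :
    rowEstimate f x h (fun r y => if y = x then -g r y else g r y) η r
      = 2 * f x - rowEstimate f x h g η r := by
  have hsum : ∑ y, (f y : ℝ) * (if y = x then -g r y else g r y) *
        (if h r y = h r x then 1 else 0)
      = (∑ y, (f y : ℝ) * g r y * (if h r y = h r x then 1 else 0)) - 2 * (f x * g r x) := by
    rw [eq_sub_iff_add_eq, ← Finset.add_sum_erase _ _ (Finset.mem_univ x),
      ← Finset.add_sum_erase _ _ (Finset.mem_univ x),
      Finset.sum_congr rfl fun y hy => by rw [if_neg (Finset.ne_of_mem_erase hy)]]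
    simp only [if_true]
    ring
  simp only [rowEstimate, if_true, hsum]
  linear_combination (2 * (f x : ℝ)) * hx

theorem abs_rowEstimate_le (hg : ∀ y, |g r y| ≤ 1) :
    |rowEstimate f x h g η r| ≤ (∑ y, |(f y : ℝ)|) + ∑ c, |η r c| := by
  have hind : ∀ y, |(f y : ℝ) * g r y * (if h r y = h r x then 1 else 0)| ≤ |(f y : ℝ)| :=
    fun y => by
      rw [mul_assoc, abs_mul, abs_mul]
      refine mul_le_of_le_one_right (abs_nonneg _) (mul_le_one₀ (hg y) (abs_nonneg _) ?_)
      split_ifs <;> simp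
  calc |rowEstimate f x h g η r|
      ≤ |(∑ y, (f y : ℝ) * g r y * (if h r y = h r x then 1 else 0)) + η r (h r x)| := by
        rw [rowEstimate, abs_mul]
        exact mul_le_of_le_one_left (abs_nonneg _) (hg x)
    _ ≤ (∑ y, |(f y : ℝ)|) + ∑ c, |η r c| :=
        (abs_add_le _ _).trans (add_le_add
          ((Finset.abs_sum_le_sum_abs _ _).trans (Finset.sum_le_sum fun y _ => hind y))
          (Finset.single_le_sum (f := fun c => |η r c|) (fun _ _ => abs_nonneg _)
            (Finset.mem_univ _)))

theorem measurable_rowEstimate {α : Type*} [MeasurableSpace α]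
    {H : α → Fin k → Fin U → Fin w} {G : α → Fin k → Fin U → ℝ}
    {N : α → Fin k → Fin w → ℝ}
    (hH : Measurable H) (hG : Measurable G) (hN : Measurable N) :
    Measurable fun a => rowEstimate f x (H a) (G a) (N a) r := by
  -- the noise column `H a r x` is random, but ranges over the countable discrete `Fin w`
  have hnoise : Measurable fun a => N a r (H a r x) :=
    (measurable_from_prod_countable_left (f := fun p : α × Fin w => N p.1 r p.2)
      fun c => hN.eval.eval).comp (measurable_id.prodMk hH.eval.eval)
  have hind : ∀ y, Measurable fun a => if H a r y = H a r x then (1 : ℝ) else 0 := fun y =>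
    measurable_const.ite (measurableSet_eq_fun hH.eval.eval hH.eval.eval) measurable_const
  exact hG.eval.eval.mul ((Finset.measurable_sum _ fun y _ =>
    (hG.eval.eval.const_mul _).mul (hind y)).add hnoise)

end RowEstimate

section SketchEstimate

variable {m U w : ℕ} (f : Fin U → ℤ) (x : Fin U)

noncomputable def sketchEstimate (v : ∀ i : CSIdx (2 * m + 1) U w, i.codomain) : ℝ :=
  median (rowEstimate f x (fun r y => v (.hash r y)) (fun r y => v (.sign r y))
    fun r c => v (.noise r c))

theorem measurable_sketchEstimate :
    Measurable (sketchEstimate (m := m) (w := w) f x) :=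
  continuous_median.measurable.comp <| measurable_pi_lambda _ fun r =>
    measurable_rowEstimate f x r (by fun_prop) (by fun_prop) (by fun_prop)

theorem sketchEstimate_flipSign (v : ∀ i : CSIdx (2 * m + 1) U w, i.codomain)
    (hv : ∀ r, v (.sign r x) = (1 : ℝ) ∨ v (.sign r x) = (-1 : ℝ)) :
    sketchEstimate f x (fun i => CSIdx.flipSign x i (v i)) = 2 * f x - sketchEstimate f x v := by
  rw [sketchEstimate, sketchEstimate, ← median_const_sub]
  congr 1
  funext r
  exact rowEstimate_flipSign f x _ _ _ r (by rcases hv r with hr | hr <;> simp [hr])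

end SketchEstimate

section SignFlip

variable {Ω : Type*} [MeasurableSpace Ω] {P : Measure Ω} {k U w : ℕ}
  {h : Fin k → Fin U → Ω → Fin w} {g : Fin k → Fin U → Ω → ℝ}
  {η : Fin k → Fin w → Ω → ℝ}

theorem map_flipSign_csVars (x : Fin U) (hmeas : ∀ i, Measurable (CSVars h g η i))
    (hdistg : ∀ r y, P.map (g r y)
      = (2 : ℝ≥0∞)⁻¹ • (Measure.dirac (1 : ℝ) + Measure.dirac (-1 : ℝ)))
    (i : CSIdx k U w) :
    P.map (fun ω => CSIdx.flipSign x i (CSVars h g η i ω)) = P.map (CSVars h g η i) := by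
  cases i with
  | hash => rfl
  | noise => rfl
  | sign r y =>
    change P.map (fun ω => if y = x then -g r y ω else g r y ω) = P.map (g r y)
    split_ifs
    · have hg : Measurable (g r y) := hmeas (.sign r y)
      change P.map (Neg.neg ∘ g r y) = _
      rw [← Measure.map_map measurable_neg hg, hdistg, map_neg_rademacher]
    · rfl

theorem identDistrib_flipSign_csVars [IsProbabilityMeasure P] (x : Fin U)
    (hmeas : ∀ i, Measurable (CSVars h g η i)) (hindep : iIndepFun (CSVars h g η) P)
    (hdistg : ∀ r y, P.map (g r y)
      = (2 : ℝ≥0∞)⁻¹ • (Measure.dirac (1 : ℝ) + Measure.dirac (-1 : ℝ))) :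
    IdentDistrib (fun ω i => CSVars h g η i ω)
      (fun ω i => CSIdx.flipSign x i (CSVars h g η i ω)) P P :=
  identDistrib_pi_of_iIndepFun (fun i => (hmeas i).aemeasurable)
    (fun i => ((CSIdx.measurable_flipSign x i).comp (hmeas i)).aemeasurable) hindep
    (hindep.comp _ (CSIdx.measurable_flipSign x))
    fun i => (map_flipSign_csVars x hmeas hdistg i).symm

end SignFlip

section Integrability

variable {Ω : Type*} [MeasurableSpace Ω] {P : Measure Ω} {m U w : ℕ}
  {h : Fin (2 * m + 1) → Fin U → Ω → Fin w} {g : Fin (2 * m + 1) → Fin U → Ω → ℝ}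
  {η : Fin (2 * m + 1) → Fin w → Ω → ℝ}

theorem integrable_sketchEstimate_csVars [IsFiniteMeasure P] (f : Fin U → ℤ) (x : Fin U)
    (hmeas : ∀ i, Measurable (CSVars h g η i))
    (hη : ∀ r c, Integrable (η r c) P) (hg : ∀ᵐ ω ∂P, ∀ r y, |g r y ω| ≤ 1) :
    Integrable (fun ω => sketchEstimate f x fun i => CSVars h g η i ω) P := by
  refine Integrable.mono' (g := fun ω => ∑ r, ((∑ y, |(f y : ℝ)|) + ∑ c, |η r c ω|))
    (integrable_finsetSum _ fun r _ =>
      (integrable_const _).add (integrable_finsetSum _ fun c _ => (hη r c).abs))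
    ((measurable_sketchEstimate f x).comp (measurable_pi_lambda _ hmeas)).aestronglyMeasurable ?_
  filter_upwards [hg] with ω hω
  exact (abs_median_le_sum_abs _).trans
    (Finset.sum_le_sum fun r _ => abs_rowEstimate_le f x _ _ _ r (hω r))

end Integrability

theorem stmt4_general {Ω : Type*} [MeasurableSpace Ω] (P : Measure Ω) [IsProbabilityMeasure P]
    (m U w : ℕ)
    (f : Fin U → ℤ) (σ : ℝ) (x : Fin U)
    (h : Fin (2 * m + 1) → Fin U → Ω → Fin w)
    (g : Fin (2 * m + 1) → Fin U → Ω → ℝ)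
    (η : Fin (2 * m + 1) → Fin w → Ω → ℝ)
    (hmeas : ∀ i : CSIdx (2 * m + 1) U w, Measurable (CSVars h g η i))
    (hindep : iIndepFun (CSVars h g η) P)
    (hdistg : ∀ r y, Measure.map (g r y) P
      = (2 : ℝ≥0∞)⁻¹ • (Measure.dirac (1 : ℝ) + Measure.dirac (-1 : ℝ)))
    (hdistη : ∀ r c, Measure.map (η r c) P = gaussianReal 0 ⟨σ ^ 2, sq_nonneg σ⟩)
    (fhat : Ω → ℝ)
    (hfh : ∀ ω, fhat ω = median (fun r =>
      g r x ω * ((∑ y : Fin U, (f y : ℝ) * g r y ω * (if h r y ω = h r x ω then 1 else 0))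
        + η r (h r x ω) ω))) :
    ∫ ω, fhat ω ∂P = (f x : ℝ) := by
  have hfhat : fhat = fun ω => sketchEstimate f x fun i => CSVars h g η i ω := funext hfh
  have hsign : ∀ᵐ ω ∂P, ∀ r y, g r y ω = 1 ∨ g r y ω = -1 :=
    ae_all_iff.2 fun r => ae_all_iff.2 fun y =>
      ae_eq_one_or_eq_neg_one_of_map_eq_rademacher (hmeas (.sign r y)).aemeasurable (hdistg r y)
  have hint : Integrable fhat P := hfhat ▸ integrable_sketchEstimate_csVars f x hmeas
    (fun r c => integrable_of_map_eq_gaussianReal (hmeas (.noise r c)).aemeasurable (hdistη r c))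
    (hsign.mono fun ω hω r y => by rcases hω r y with hy | hy <;> simp [hy])
  have hflip : (fun ω => sketchEstimate f x fun i => CSIdx.flipSign x i (CSVars h g η i ω))
      =ᵐ[P] fun ω => 2 * f x - fhat ω :=
    hsign.mono fun ω hω => (sketchEstimate_flipSign f x _ fun r => hω r x).trans (by rw [hfhat])
  have hsymm := ((identDistrib_flipSign_csVars x hmeas hindep hdistg).comp
    (measurable_sketchEstimate f x)).integral_eq
  simp only [Function.comp_def, ← hfhat] at hsymm
  rw [integral_congr_ae hflip, integral_sub (integrable_const _) hint, integral_const] at hsymm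
  simp only [probReal_univ, smul_eq_mul, one_mul] at hsymm
  linarith

/-- The private CountSketch frequency estimate, built from fully random hashes
uniform on `Fin w`, fully random signs uniform on `{-1,+1}`, and independent `N(0,σ²)` noise,
all mutually independent, is unbiased: `E[f̂(x)] = f(x)`. -/
theorem stmt4 {Ω : Type*} [MeasurableSpace Ω] (P : Measure Ω) [IsProbabilityMeasure P]
    (m U w : ℕ) (hU : 1 ≤ U) (hw : 1 ≤ w)
    (f : Fin U → ℤ) (σ : ℝ) (hσ : 0 ≤ σ) (x : Fin U)
    (h : Fin (2 * m + 1) → Fin U → Ω → Fin w)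
    (g : Fin (2 * m + 1) → Fin U → Ω → ℝ)
    (η : Fin (2 * m + 1) → Fin w → Ω → ℝ)
    (hmeas : ∀ i : CSIdx (2 * m + 1) U w, Measurable (CSVars h g η i))
    (hindep : iIndepFun (CSVars h g η) P)
    (hdisth : ∀ r y, Measure.map (h r y) P = (w : ℝ≥0∞)⁻¹ • Measure.count)
    (hdistg : ∀ r y, Measure.map (g r y) P
      = (2 : ℝ≥0∞)⁻¹ • (Measure.dirac (1 : ℝ) + Measure.dirac (-1 : ℝ)))
    (hdistη : ∀ r c, Measure.map (η r c) P = gaussianReal 0 ⟨σ ^ 2, sq_nonneg σ⟩)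
    (fhat : Ω → ℝ)
    (hfh : ∀ ω, fhat ω = median (fun r =>
      g r x ω * ((∑ y : Fin U, (f y : ℝ) * g r y ω * (if h r y ω = h r x ω then 1 else 0))
        + η r (h r x ω) ω))) :
    ∫ ω, fhat ω ∂P = (f x : ℝ) :=
  stmt4_general P m U w f σ x h g η hmeas hindep hdistg hdistη fhat hfh
end

section
/- Let m ∈ ℕ, B > 0, v ∈ ℝ, and let a : Fin(2m+1) → ℝ be a tuple such that a(i₀) = v for some index i₀, exactly m indices i satisfy a(i) > v + 2B, and exactly m indices i satisfy a(i) < v − 2B. Let η : Fin(2m+1) → ℝ satisfy |η(i)| ≤ B for all i. Then median(a) = v and median(i ↦ a(i) + η(i)) = v + η(i₀). In particular, the median of the perturbed tuple differs from the median of the original tuple by exactly the perturbation η(i₀) at the central entry. -/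
/-!
In a sorted list `l`, the entry `l[k]` is `x` as soon as at least `k + 1` entries are `≤ x` and
at least `length - k` entries are `≥ x`. In the perturbed tuple the entries indexed by
`{i | v + 2B < a i}` stay above `v + B ≥ a i₀ + η i₀`, and those indexed by `{i | a i < v - 2B}`
stay below `v - B`, so together with `i₀` each side supplies the `m + 1` entries needed. The
unperturbed claim is the case `η = 0`.
-/

open Finset

namespace List

variable {α : Type*} [LinearOrder α] {l : List α} {x : α} {k : ℕ}

theorem SortedLE.le_getElem_of_countP_lt_le (hl : l.SortedLE) (hk : k < l.length)
    (h : l.countP (· < x) ≤ k) : x ≤ l[k] := by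
  by_contra! hlt
  have htake : (l.take (k + 1)).countP (· < x) = k + 1 := by
    rw [countP_eq_length.2, length_take, min_eq_left hk]
    intro y hy
    obtain ⟨i, hi, rfl⟩ := mem_take_iff_getElem.1 hy
    exact decide_eq_true <| (hl.getElem_le_getElem_of_le (by omega)).trans_lt hlt
  have := (take_sublist (k + 1) l).countP_le (p := (· < x))
  omega

theorem SortedLE.getElem_le_of_countP_gt_lt (hl : l.SortedLE) (hk : k < l.length)
    (h : k + l.countP (x < ·) < l.length) : l[k] ≤ x := by
  by_contra! hlt
  have hdrop : (l.drop k).countP (x < ·) = l.length - k := by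
    rw [countP_eq_length.2, length_drop]
    intro y hy
    obtain ⟨i, hi, rfl⟩ := mem_drop_iff_getElem.1 hy
    exact decide_eq_true <| hlt.trans_le (hl.getElem_le_getElem_of_le (by omega))
  have := (drop_sublist k l).countP_le (p := (x < ·))
  omega

end List

theorem median_eq_of_le_card {m : ℕ} {a : Fin (2 * m + 1) → ℝ} {x : ℝ}
    (hge : m + 1 ≤ #{i | x ≤ a i}) (hle : m + 1 ≤ #{i | a i ≤ x}) : median a = x := by
  set l := Multiset.sort (Multiset.map a univ.val) (· ≤ ·)
  have hsorted : l.SortedLE := (Multiset.pairwise_sort _ _).sortedLE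
  have hlen : l.length = 2 * m + 1 := by simp [l]
  have hcount : ∀ (p : ℝ → Prop) [DecidablePred p], l.countP p = #{i | p (a i)} := by
    intro p _
    rw [← Multiset.coe_countP, Multiset.sort_eq, Multiset.countP_map, ← filter_val, card_val]
  have hlt : #{i | a i < x} + #{i | x ≤ a i} = 2 * m + 1 := by
    simpa [not_lt] using card_filter_add_card_filter_not (s := univ) (fun i => a i < x)
  have hgt : #{i | x < a i} + #{i | a i ≤ x} = 2 * m + 1 := by
    simpa [not_lt] using card_filter_add_card_filter_not (s := univ) (fun i => x < a i)
  refine le_antisymm (hsorted.getElem_le_of_countP_gt_lt _ ?_)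
    (hsorted.le_getElem_of_countP_lt_le _ ?_)
  · rw [hcount (x < ·)]; omega
  · rw [hcount (· < x)]; omega

theorem median_add_eq_of_gap {m : ℕ} {B v : ℝ} {a η : Fin (2 * m + 1) → ℝ} {i₀ : Fin (2 * m + 1)}
    (ha : a i₀ = v) (hup : m ≤ #{i | v + 2 * B < a i}) (hdown : m ≤ #{i | a i < v - 2 * B})
    (hη : ∀ i, |η i| ≤ B) : median (fun i => a i + η i) = v + η i₀ := by
  have hB : 0 ≤ B := (abs_nonneg _).trans (hη i₀)
  have hη₀ := abs_le.1 (hη i₀)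
  apply median_eq_of_le_card
  · calc m + 1 ≤ #(insert i₀ ({i | v + 2 * B < a i} : Finset _)) := by
          rw [card_insert_of_notMem (by simp [ha]; linarith)]; omega
      _ ≤ _ := card_le_card fun i hi => by
          simp only [mem_insert, mem_filter, mem_univ, true_and] at hi ⊢
          rcases hi with rfl | hi
          · rw [ha]
          · linarith [(abs_le.1 (hη i)).1]
  · calc m + 1 ≤ #(insert i₀ ({i | a i < v - 2 * B} : Finset _)) := by
          rw [card_insert_of_notMem (by simp [ha]; linarith)]; omega
      _ ≤ _ := card_le_card fun i hi => by
          simp only [mem_insert, mem_filter, mem_univ, true_and] at hi ⊢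
          rcases hi with rfl | hi
          · rw [ha]
          · linarith [(abs_le.1 (hη i)).2]

theorem stmt7_general (m : ℕ) (B v : ℝ)
    (a : Fin (2 * m + 1) → ℝ) (i₀ : Fin (2 * m + 1)) (ha : a i₀ = v)
    (hup : (Finset.univ.filter (fun i => v + 2 * B < a i)).card = m)
    (hdown : (Finset.univ.filter (fun i => a i < v - 2 * B)).card = m)
    (η : Fin (2 * m + 1) → ℝ) (hη : ∀ i, |η i| ≤ B) :
    median a = v ∧ median (fun i => a i + η i) = v + η i₀ := by
  have hzero : ∀ i, |(0 : Fin (2 * m + 1) → ℝ) i| ≤ B := fun _ => by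
    simpa using (abs_nonneg _).trans (hη i₀)
  exact ⟨by simpa using median_add_eq_of_gap ha hup.ge hdown.ge hzero,
    median_add_eq_of_gap ha hup.ge hdown.ge hη⟩

/-- If `a` has one entry equal to `v`, exactly `m` entries above `v + 2B` and
exactly `m` entries below `v - 2B`, then `median a = v`, and after any entrywise perturbation
`η` bounded by `B`, the median becomes exactly `v + η(i₀)`, the perturbation of the central
entry. -/
theorem stmt7 (m : ℕ) (B v : ℝ) (hB : 0 < B)
    (a : Fin (2 * m + 1) → ℝ) (i₀ : Fin (2 * m + 1)) (ha : a i₀ = v)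
    (hup : (Finset.univ.filter (fun i => v + 2 * B < a i)).card = m)
    (hdown : (Finset.univ.filter (fun i => a i < v - 2 * B)).card = m)
    (η : Fin (2 * m + 1) → ℝ) (hη : ∀ i, |η i| ≤ B) :
    median a = v ∧ median (fun i => a i + η i) = v + η i₀ :=
  stmt7_general m B v a i₀ ha hup hdown η hη
end

section
/- Fix k, w, U ≥ 1 and hash functions h_r : Fin U → Fin w for r ∈ Fin k, and for a frequency function f : Fin U → ℕ let T_f[r,c] = Σ_{y : h_r(y)=c} f(y) denote the Count-Min counter array. If f, f' : Fin U → ℕ are neighboring under replacement — i.e., there exist items a, b ∈ Fin U with f(a) ≥ 1 such that f' agrees with f except that f'(a) = f(a) − 1 and f'(b) = f(b) + 1 (and f' = f if a = b) — then Σ_{r ∈ Fin k} Σ_{c ∈ Fin w} (T_f[r,c] − T_{f'}[r,c])² ≤ 2k. In particular the ℓ₂-sensitivity of the Count-Min counter array is at most √(2k). -/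
/-!
Count-Min counters are linear in the frequency vector, and a replacement step changes that
vector by `e_a - e_b`. Each row of counters therefore changes by `e_{h_r a} - e_{h_r b}`,
whose squared norm is `0` or `2`; summing over the `k` rows gives `2k`.
-/

open Finset

theorem sum_filter_apply_eq_pi_single {α β M : Type*} [Fintype α] [DecidableEq α]
    [DecidableEq β] [AddCommMonoid M] (h : α → β) (a : α) (x : M) (c : β) :
    ∑ y ∈ univ.filter (fun y => h y = c), (Pi.single a x : α → M) y =
      (Pi.single (h a) x : β → M) c := by
  simp [Pi.single_apply, eq_comm]

theorem sum_sq_pi_single_sub_pi_single_le {β : Type*} [Fintype β] [DecidableEq β] (p q : β) :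
    ∑ c, ((Pi.single p 1 : β → ℝ) c - (Pi.single q 1 : β → ℝ) c) ^ 2 ≤ 2 := by
  calc ∑ c, ((Pi.single p 1 : β → ℝ) c - (Pi.single q 1 : β → ℝ) c) ^ 2
      ≤ ∑ c, ((Pi.single p 1 : β → ℝ) c + (Pi.single q 1 : β → ℝ) c) :=
        sum_le_sum fun c _ => by simp only [Pi.single_apply]; split_ifs <;> norm_num
    _ = 2 := by rw [sum_add_distrib]; norm_num

theorem cast_sub_eq_pi_single_sub_pi_single {α : Type*} [DecidableEq α] {f f' : α → ℕ}
    {a b : α} (hfa : 1 ≤ f a)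
    (hneighbor : if a = b then f' = f else
      (f' a = f a - 1 ∧ f' b = f b + 1 ∧ ∀ y, y ≠ a → y ≠ b → f' y = f y))
    (y : α) :
    (f y : ℝ) - f' y = (Pi.single a 1 : α → ℝ) y - (Pi.single b 1 : α → ℝ) y := by
  split_ifs at hneighbor with hab
  · subst hab hneighbor
    ring
  · obtain ⟨hf'a, hf'b, hf'y⟩ := hneighbor
    rcases eq_or_ne y a with rfl | hya
    · simp [hf'a, hab, Nat.cast_sub hfa]
    rcases eq_or_ne y b with rfl | hyb
    · simp [hf'b, hya]
    · simp [hf'y y hya hyb, hya, hyb]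

theorem stmt8_general (k w U : ℕ)
    (h : Fin k → Fin U → Fin w) (f f' : Fin U → ℕ)
    (a b : Fin U) (hfa : 1 ≤ f a)
    (hneighbor : if a = b then f' = f else
      (f' a = f a - 1 ∧ f' b = f b + 1 ∧ ∀ y, y ≠ a → y ≠ b → f' y = f y))
    (T : (Fin U → ℕ) → Fin k → Fin w → ℝ)
    (hT : ∀ F r c, T F r c = ∑ y ∈ Finset.univ.filter (fun y => h r y = c), (F y : ℝ)) :
    ∑ r : Fin k, ∑ c : Fin w, (T f r c - T f' r c) ^ 2 ≤ 2 * k := by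
  have hrow : ∀ r c, T f r c - T f' r c =
      (Pi.single (h r a) 1 : Fin w → ℝ) c - (Pi.single (h r b) 1 : Fin w → ℝ) c := by
    intro r c
    simp_rw [hT, ← sum_sub_distrib, cast_sub_eq_pi_single_sub_pi_single hfa hneighbor,
      sum_sub_distrib, sum_filter_apply_eq_pi_single]
  calc ∑ r : Fin k, ∑ c : Fin w, (T f r c - T f' r c) ^ 2
      = ∑ r : Fin k, ∑ c : Fin w,
          ((Pi.single (h r a) 1 : Fin w → ℝ) c - (Pi.single (h r b) 1 : Fin w → ℝ) c) ^ 2 :=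
        by simp only [hrow]
    _ ≤ ∑ _r : Fin k, 2 := sum_le_sum fun r _ => sum_sq_pi_single_sub_pi_single_le _ _
    _ = 2 * k := by simp [mul_comm]

/-- The squared ℓ₂ distance between the Count-Min counter arrays of two
frequency functions that are neighboring under replacement (one unit of mass moved from item
`a` to item `b`) is at most `2k`; i.e. the ℓ₂-sensitivity of the counter array is `≤ √(2k)`. -/
theorem stmt8 (k w U : ℕ) (hk : 1 ≤ k) (hw : 1 ≤ w) (hU : 1 ≤ U)
    (h : Fin k → Fin U → Fin w) (f f' : Fin U → ℕ)
    (a b : Fin U) (hfa : 1 ≤ f a)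
    (hneighbor : if a = b then f' = f else
      (f' a = f a - 1 ∧ f' b = f b + 1 ∧ ∀ y, y ≠ a → y ≠ b → f' y = f y))
    (T : (Fin U → ℕ) → Fin k → Fin w → ℝ)
    (hT : ∀ F r c, T F r c = ∑ y ∈ Finset.univ.filter (fun y => h r y = c), (F y : ℝ)) :
    ∑ r : Fin k, ∑ c : Fin w, (T f r c - T f' r c) ^ 2 ≤ 2 * k :=
  stmt8_general k w U h f f' a b hfa hneighbor T hT
end

section
/- Let σ > 0, μ₁, μ₂ ∈ ℝ and α > 1, and let p_i(x) = (1/(σ√(2π)))·exp(−(x − μ_i)²/(2σ²)) be the density of the Gaussian N(μ_i, σ²) for i = 1, 2. Then (1/(α−1))·log ∫_ℝ p₁(x)^α · p₂(x)^{1−α} dx = α·(μ₁ − μ₂)²/(2σ²). That is, the α-Rényi divergence between two Gaussians with common variance σ² and means at distance Δ = |μ₁ − μ₂| equals α·Δ²/(2σ²); equivalently, the Gaussian mechanism with noise variance σ² = Δ²/(2ρ) satisfies ρ-zero-concentrated differential privacy. -/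
/-!
Raising two Gaussian densities of the same variance `v` to the powers `α` and `1 - α` and
multiplying is a weighted sum of the two exponents; completing the square turns it into the
Gaussian density centred at `α μ₁ + (1 - α) μ₂` times the constant
`exp (α (α - 1) (μ₁ - μ₂)² / (2 v))`. The density integrates to one, so the integral is that
constant, and its logarithm divided by `α - 1` is `α (μ₁ - μ₂)² / (2 v)`.
-/

open MeasureTheory Real

open scoped NNReal

namespace ProbabilityTheory

noncomputable def renyiDivergence {Ω : Type*} [MeasurableSpace Ω] (μ : Measure Ω) (α : ℝ)
    (p q : Ω → ℝ) : ℝ :=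
  (1 / (α - 1)) * log (∫ x, p x ^ α * q x ^ (1 - α) ∂μ)

lemma gaussianPDFReal_rpow_mul_rpow (μ₁ μ₂ α : ℝ) {v : ℝ≥0} (hv : v ≠ 0) (x : ℝ) :
    gaussianPDFReal μ₁ v x ^ α * gaussianPDFReal μ₂ v x ^ (1 - α)
      = exp (α * (α - 1) * (μ₁ - μ₂) ^ 2 / (2 * v))
        * gaussianPDFReal (α * μ₁ + (1 - α) * μ₂) v x := by
  have hc : 0 < (√(2 * π * v))⁻¹ := by
    have : (0 : ℝ) < v := by positivity
    positivity
  have complete_square :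
      -(x - μ₁) ^ 2 / (2 * v) * α + -(x - μ₂) ^ 2 / (2 * v) * (1 - α)
        = α * (α - 1) * (μ₁ - μ₂) ^ 2 / (2 * v)
          + -(x - (α * μ₁ + (1 - α) * μ₂)) ^ 2 / (2 * v) := by
    have hv' : (v : ℝ) ≠ 0 := by exact_mod_cast hv
    field_simp
    ring
  simp only [gaussianPDFReal]
  rw [mul_rpow hc.le (exp_pos _).le, mul_rpow hc.le (exp_pos _).le, ← exp_mul, ← exp_mul]
  calc _ = ((√(2 * π * v))⁻¹ ^ α * (√(2 * π * v))⁻¹ ^ (1 - α))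
          * exp (-(x - μ₁) ^ 2 / (2 * v) * α + -(x - μ₂) ^ 2 / (2 * v) * (1 - α)) := by
        rw [exp_add]
        ring
    _ = _ := by
        rw [← rpow_add hc, add_sub_cancel, rpow_one, complete_square, exp_add]
        ring

lemma integral_gaussianPDFReal_rpow_mul_rpow (μ₁ μ₂ α : ℝ) {v : ℝ≥0} (hv : v ≠ 0) :
    ∫ x, gaussianPDFReal μ₁ v x ^ α * gaussianPDFReal μ₂ v x ^ (1 - α)
      = exp (α * (α - 1) * (μ₁ - μ₂) ^ 2 / (2 * v)) := by
  simp_rw [gaussianPDFReal_rpow_mul_rpow μ₁ μ₂ α hv]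
  rw [integral_const_mul, integral_gaussianPDFReal_eq_one _ hv, mul_one]

lemma renyiDivergence_gaussianPDFReal (μ₁ μ₂ : ℝ) {α : ℝ} (hα : α ≠ 1) {v : ℝ≥0}
    (hv : v ≠ 0) :
    renyiDivergence volume α (gaussianPDFReal μ₁ v) (gaussianPDFReal μ₂ v)
      = α * (μ₁ - μ₂) ^ 2 / (2 * v) := by
  have : α - 1 ≠ 0 := sub_ne_zero.mpr hα
  rw [renyiDivergence, integral_gaussianPDFReal_rpow_mul_rpow μ₁ μ₂ α hv, log_exp]
  field_simp

lemma gaussianPDFReal_sq (μ : ℝ) {σ : ℝ} (hσ : 0 < σ) (x : ℝ) :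
    gaussianPDFReal μ (σ ^ 2).toNNReal x
      = (1 / (σ * √(2 * π))) * exp (-(x - μ) ^ 2 / (2 * σ ^ 2)) := by
  simp only [gaussianPDFReal, Real.coe_toNNReal _ (sq_nonneg σ)]
  rw [one_div, mul_comm (2 * π), sqrt_mul (sq_nonneg σ), sqrt_sq hσ.le]

end ProbabilityTheory

open ProbabilityTheory

/-- The α-Rényi divergence between two Gaussians with common variance `σ²`
and means `μ₁, μ₂` equals `α·(μ₁-μ₂)²/(2σ²)`: this is the zCDP guarantee of the Gaussian
mechanism. -/
theorem stmt9 (σ μ₁ μ₂ α : ℝ) (hσ : 0 < σ) (hα : 1 < α) :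
    (1 / (α - 1)) * Real.log (∫ x : ℝ,
        ((1 / (σ * Real.sqrt (2 * π))) * Real.exp (-(x - μ₁) ^ 2 / (2 * σ ^ 2))) ^ α *
        ((1 / (σ * Real.sqrt (2 * π))) * Real.exp (-(x - μ₂) ^ 2 / (2 * σ ^ 2))) ^ (1 - α))
      = α * (μ₁ - μ₂) ^ 2 / (2 * σ ^ 2) := by
  have hv : (σ ^ 2).toNNReal ≠ 0 := (Real.toNNReal_pos.mpr (pow_pos hσ 2)).ne'
  simp_rw [← gaussianPDFReal_sq _ hσ]
  have h := renyiDivergence_gaussianPDFReal μ₁ μ₂ hα.ne' hv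
  rwa [Real.coe_toNNReal _ (sq_nonneg σ)] at h
end

section
/- Let Δ > 0, ρ > 0, δ ∈ (0,1), set σ² = Δ²/(2ρ) and ε = ρ + 2·√(ρ·log(1/δ)). Then for all μ₁, μ₂ ∈ ℝ with |μ₁ − μ₂| ≤ Δ and every Borel set S ⊆ ℝ, N(μ₁, σ²)(S) ≤ e^ε · N(μ₂, σ²)(S) + δ. That is, the one-dimensional Gaussian mechanism with noise level σ² = Δ²/(2ρ) on a statistic of ℓ₂-sensitivity Δ satisfies (ρ + 2√(ρ·log(1/δ)), δ)-differential privacy. -/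
open MeasureTheory ProbabilityTheory Real
open scoped ENNReal NNReal

/-!
The privacy loss `log (dN(μ₁, v) / dN(μ₂, v)) x = ((x - μ₂)² - (x - μ₁)²) / (2v)` is affine in `x`,
so under `N(μ₁, v)` it has law `N(r, 2r)` with `r = (μ₁ - μ₂)² / (2v) ≤ ρ`: the mechanism is
`ρ`-zCDP. Off the event `{loss > ε}` the density ratio is at most `e^ε`, and a Chernoff bound with
the moment generating function of `N(r, 2r)` shows that this event has probability at most `δ`.
-/

theorem withDensity_exp_le_exp_mul_add {α : Type*} [MeasurableSpace α] (Q : Measure α) [SFinite Q]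
    {L : α → ℝ} (hL : Measurable L) (ε : ℝ) (S : Set α) :
    Q.withDensity (fun x ↦ ENNReal.ofReal (exp (L x))) S
      ≤ ENNReal.ofReal (exp ε) * Q S
        + Q.withDensity (fun x ↦ ENNReal.ofReal (exp (L x))) {x | ε < L x} := by
  set P := Q.withDensity (fun x ↦ ENNReal.ofReal (exp (L x)))
  have hbad : MeasurableSet {x | ε < L x} := measurableSet_lt measurable_const hL
  have hgood : P (S \ {x | ε < L x}) ≤ ENNReal.ofReal (exp ε) * Q S := by
    calc P (S \ {x | ε < L x})
        ≤ ∫⁻ _ in S \ {x | ε < L x}, ENNReal.ofReal (exp ε) ∂Q := by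
          rw [withDensity_apply']
          refine setLIntegral_mono measurable_const fun x hx ↦ ?_
          exact ENNReal.ofReal_le_ofReal (exp_le_exp.mpr (not_lt.mp hx.2))
      _ ≤ ENNReal.ofReal (exp ε) * Q S := by
          rw [setLIntegral_const]
          gcongr; exact Set.sdiff_subset
  calc P S = P (S ∩ {x | ε < L x}) + P (S \ {x | ε < L x}) := (measure_inter_add_sdiff S hbad).symm
    _ ≤ P {x | ε < L x} + ENNReal.ofReal (exp ε) * Q S :=
        add_le_add (measure_mono Set.inter_subset_right) hgood
    _ = _ := add_comm _ _

theorem gaussianReal_Ici_le (m : ℝ) (w : ℝ≥0) (t : ℝ) {s : ℝ} (hs : 0 ≤ s) :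
    gaussianReal m w (Set.Ici t) ≤ ENNReal.ofReal (exp (s * (m - t) + w * s ^ 2 / 2)) := by
  rw [← ofReal_measureReal]
  refine ENNReal.ofReal_le_ofReal ?_
  calc (gaussianReal m w).real (Set.Ici t) = (gaussianReal m w).real {x | t ≤ id x} := rfl
    _ ≤ exp (-s * t) * mgf id (gaussianReal m w) s :=
        measure_ge_le_exp_mul_mgf t hs (integrable_exp_mul_gaussianReal s)
    _ = exp (s * (m - t) + w * s ^ 2 / 2) := by
        rw [mgf_id_gaussianReal, ← exp_add]; ring_nf

noncomputable def gaussianPrivacyLoss (μ₁ μ₂ : ℝ) (v : ℝ≥0) (x : ℝ) : ℝ :=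
  ((x - μ₂) ^ 2 - (x - μ₁) ^ 2) / (2 * v)

theorem gaussianPDFReal_eq_exp_privacyLoss_mul (μ₁ μ₂ : ℝ) (v : ℝ≥0) (x : ℝ) :
    gaussianPDFReal μ₁ v x = exp (gaussianPrivacyLoss μ₁ μ₂ v x) * gaussianPDFReal μ₂ v x := by
  rw [gaussianPDFReal, gaussianPDFReal, mul_left_comm, ← exp_add, gaussianPrivacyLoss]
  ring_nf

theorem measurable_gaussianPrivacyLoss (μ₁ μ₂ : ℝ) (v : ℝ≥0) :
    Measurable (gaussianPrivacyLoss μ₁ μ₂ v) := by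
  unfold gaussianPrivacyLoss; fun_prop

theorem gaussianReal_eq_withDensity_exp_privacyLoss (μ₁ μ₂ : ℝ) {v : ℝ≥0} (hv : v ≠ 0) :
    gaussianReal μ₁ v = (gaussianReal μ₂ v).withDensity
      fun x ↦ ENNReal.ofReal (exp (gaussianPrivacyLoss μ₁ μ₂ v x)) := by
  rw [gaussianReal_of_var_ne_zero _ hv, gaussianReal_of_var_ne_zero _ hv,
    ← withDensity_mul _ (measurable_gaussianPDF _ _)
      (measurable_gaussianPrivacyLoss μ₁ μ₂ v).exp.ennreal_ofReal]
  congr 1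
  ext x
  rw [Pi.mul_apply, gaussianPDF, gaussianPDF, ← ENNReal.ofReal_mul (gaussianPDFReal_nonneg _ _ _),
    mul_comm, ← gaussianPDFReal_eq_exp_privacyLoss_mul]

theorem hasLaw_gaussianPrivacyLoss (μ₁ μ₂ : ℝ) {v : ℝ≥0} (hv : v ≠ 0) {r : ℝ≥0}
    (hr : (r : ℝ) = (μ₁ - μ₂) ^ 2 / (2 * v)) :
    HasLaw (gaussianPrivacyLoss μ₁ μ₂ v) (gaussianReal r (2 * r)) (gaussianReal μ₁ v) := by
  have hv' : (v : ℝ) ≠ 0 := NNReal.coe_ne_zero.mpr hv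
  have hlaw := gaussianReal_add_const
    (gaussianReal_const_mul (HasLaw.id (μ := gaussianReal μ₁ v)) ((μ₁ - μ₂) / v))
    ((μ₂ ^ 2 - μ₁ ^ 2) / (2 * v))
  convert hlaw using 2
  · simp only [gaussianPrivacyLoss, id]
    field_simp
    ring
  · rw [hr]; field_simp; ring
  · ext
    push_cast
    rw [hr]
    field_simp

noncomputable def zcdpEpsilon (ρ δ : ℝ) : ℝ := ρ + 2 * √(ρ * log (1 / δ))

theorem gaussianReal_Ici_zcdpEpsilon_le {ρ δ : ℝ} (hρ : 0 < ρ) (hδ₀ : 0 < δ) (hδ₁ : δ ≤ 1)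
    {r : ℝ≥0} (hr : (r : ℝ) ≤ ρ) :
    gaussianReal r (2 * r) (Set.Ici (zcdpEpsilon ρ δ)) ≤ ENNReal.ofReal δ := by
  set ℓ := log (1 / δ)
  have hℓ : 0 ≤ ℓ := log_nonneg (one_le_one_div hδ₀ hδ₁)
  -- the Chernoff parameter that is optimal when `r = ρ`
  set s := √(ℓ / ρ)
  have hs : 0 ≤ s := sqrt_nonneg _
  have hs_sq : s ^ 2 = ℓ / ρ := sq_sqrt (by positivity)
  have hsqrt : √(ρ * ℓ) = ρ * s := by
    rw [← sqrt_sq (by positivity : 0 ≤ ρ * s), mul_pow, hs_sq]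
    field_simp
  calc gaussianReal r (2 * r) (Set.Ici (zcdpEpsilon ρ δ))
      ≤ ENNReal.ofReal (exp (s * (r - zcdpEpsilon ρ δ) + (2 * r : ℝ≥0) * s ^ 2 / 2)) :=
        gaussianReal_Ici_le _ _ _ hs
    _ ≤ ENNReal.ofReal (exp (-ℓ)) := by
        gcongr
        have : ℓ = ρ * s ^ 2 := by rw [hs_sq]; field_simp
        rw [zcdpEpsilon, hsqrt, this]
        push_cast
        nlinarith [mul_nonneg (sub_nonneg.mpr hr) (add_nonneg hs (sq_nonneg s))]
    _ = ENNReal.ofReal δ := by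
        rw [show -ℓ = log δ by simp [ℓ], exp_log hδ₀]

theorem measure_le_exp_zcdpEpsilon_mul_add {α : Type*} [MeasurableSpace α] {P Q : Measure α}
    [SFinite Q] {L : α → ℝ} (hL : Measurable L)
    (hPQ : P = Q.withDensity fun x ↦ ENNReal.ofReal (exp (L x)))
    {r : ℝ≥0} (hlaw : HasLaw L (gaussianReal r (2 * r)) P)
    {ρ δ : ℝ} (hρ : 0 < ρ) (hr : (r : ℝ) ≤ ρ) (hδ₀ : 0 < δ) (hδ₁ : δ ≤ 1) (S : Set α) :
    P S ≤ ENNReal.ofReal (exp (zcdpEpsilon ρ δ)) * Q S + ENNReal.ofReal δ := by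
  have htail : P {x | zcdpEpsilon ρ δ < L x} ≤ ENNReal.ofReal δ :=
    calc P {x | zcdpEpsilon ρ δ < L x} ≤ P {x | zcdpEpsilon ρ δ ≤ L x} :=
          measure_mono (Set.ofPred_subset_ofPred.mpr fun _ ↦ le_of_lt)
      _ = gaussianReal r (2 * r) (Set.Ici (zcdpEpsilon ρ δ)) :=
          hlaw.measure_eq measurableSet_Ici
      _ ≤ ENNReal.ofReal δ := gaussianReal_Ici_zcdpEpsilon_le hρ hδ₀ hδ₁ hr
  calc P S ≤ ENNReal.ofReal (exp (zcdpEpsilon ρ δ)) * Q S + P {x | zcdpEpsilon ρ δ < L x} := by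
        rw [hPQ]; exact withDensity_exp_le_exp_mul_add Q hL _ S
    _ ≤ _ := by gcongr

/-- The one-dimensional Gaussian mechanism with noise variance
`σ² = Δ²/(2ρ)` on a statistic of sensitivity `Δ` satisfies `(ρ + 2√(ρ·log(1/δ)), δ)`-DP:
for any two means at distance at most `Δ` and any Borel set `S`,
`N(μ₁,σ²)(S) ≤ e^ε · N(μ₂,σ²)(S) + δ`. -/
theorem stmt10 (Δ ρ δ : ℝ) (hΔ : 0 < Δ) (hρ : 0 < ρ) (hδ : δ ∈ Set.Ioo (0 : ℝ) 1)
    (v : ℝ≥0) (hv : (v : ℝ) = Δ ^ 2 / (2 * ρ))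
    (ε : ℝ) (hε : ε = ρ + 2 * Real.sqrt (ρ * Real.log (1 / δ))) :
    ∀ μ₁ μ₂ : ℝ, |μ₁ - μ₂| ≤ Δ → ∀ S : Set ℝ, MeasurableSet S →
      gaussianReal μ₁ v S ≤ ENNReal.ofReal (Real.exp ε) * gaussianReal μ₂ v S
        + ENNReal.ofReal δ := by
  intro μ₁ μ₂ hμ S _
  have hv₀ : v ≠ 0 := by
    rw [← NNReal.coe_ne_zero, hv]; positivity
  have hsens : (μ₁ - μ₂) ^ 2 ≤ 2 * ρ * v := by
    rw [hv, mul_div_cancel₀ _ (by positivity)]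
    exact sq_le_sq' (abs_le.mp hμ).1 (abs_le.mp hμ).2
  let r : ℝ≥0 := ⟨(μ₁ - μ₂) ^ 2 / (2 * v), by positivity⟩
  have hr : (r : ℝ) ≤ ρ := by
    change (μ₁ - μ₂) ^ 2 / (2 * v) ≤ ρ
    rw [div_le_iff₀ (by positivity)]; linarith
  rw [hε]
  exact measure_le_exp_zcdpEpsilon_mul_add (measurable_gaussianPrivacyLoss μ₁ μ₂ v)
    (gaussianReal_eq_withDensity_exp_privacyLoss μ₁ μ₂ hv₀)
    (hasLaw_gaussianPrivacyLoss μ₁ μ₂ hv₀ rfl) hρ hr hδ.1 hδ.2.le S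
end

section
/- Let L ∈ ℕ, let f : ℕ → ℕ, and let x be a natural number with x < 2^L. Then Σ_{y < x} f(y) = Σ_{j=0}^{L−1} ( if ⌊x/2^j⌋ is odd then Σ_{y : ⌊y/2^j⌋ = ⌊x/2^j⌋ − 1} f(y) else 0 ), where ⌊·/·⌋ denotes natural-number division and the inner sum ranges over the finitely many naturals y with ⌊y/2^j⌋ = ⌊x/2^j⌋ − 1. That is, the rank (number of items strictly below x, counted with frequency) decomposes into the frequencies of at most L dyadic intervals. -/
/-!
Cut `[0, x)` at the multiples `⌊x/2^j⌋ 2^j`, for `j = L, L-1, …, 0`; these decrease from `0`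
(as `x < 2^L`) to `x`. Passing from level `j + 1` to level `j` appends the interval
`[⌊n/2⌋ 2^(j+1), n 2^j)` with `n = ⌊x/2^j⌋`, which is empty when `n` is even and is the dyadic
block `[(n-1) 2^j, n 2^j)` when `n` is odd.
-/

open Finset

variable {M : Type*} [AddCommMonoid M]

theorem Nat.filter_range_div_eq {N d k : ℕ} (hd : 0 < d) (hN : (k + 1) * d ≤ N) :
    (range N).filter (fun y => y / d = k) = Ico (k * d) ((k + 1) * d) := by
  ext y
  simp only [mem_filter, mem_range, mem_Ico, Nat.div_eq_iff hd]
  constructor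
  · rintro ⟨-, hlo, hhi⟩
    exact ⟨hlo, by rw [add_one_mul]; omega⟩
  · rintro ⟨hlo, hhi⟩
    exact ⟨by omega, hlo, by rw [add_one_mul] at hhi; omega⟩

theorem sum_Ico_div_two_mul_two_mul (f : ℕ → M) (n d : ℕ) :
    ∑ y ∈ Ico (n / 2 * 2 * d) (n * d), f y =
      if Odd n then ∑ y ∈ Ico ((n - 1) * d) (n * d), f y else 0 := by
  split_ifs with hn
  · have hsplit := Nat.div_two_mul_two_add_one_of_odd hn
    rw [show n - 1 = n / 2 * 2 by omega]
  · rw [Nat.div_two_mul_two_of_even (Nat.not_odd_iff_even.mp hn), Ico_self, sum_empty]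

theorem sum_Ico_div_two_pow_mul_two_pow (f : ℕ → M) (x : ℕ) :
    ∀ L, ∑ y ∈ Ico (x / 2 ^ L * 2 ^ L) x, f y =
      ∑ j ∈ range L, if Odd (x / 2 ^ j) then
        ∑ y ∈ Ico ((x / 2 ^ j - 1) * 2 ^ j) (x / 2 ^ j * 2 ^ j), f y else 0
  | 0 => by simp
  | L + 1 => by
    have hcut : x / 2 ^ (L + 1) * 2 ^ (L + 1) = x / 2 ^ L / 2 * 2 * 2 ^ L := by
      rw [pow_succ, ← Nat.div_div_eq_div_mul]; ring
    have hle : x / 2 ^ L / 2 * 2 * 2 ^ L ≤ x / 2 ^ L * 2 ^ L :=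
      Nat.mul_le_mul_right _ (Nat.div_mul_le_self _ _)
    rw [hcut, ← sum_Ico_consecutive f hle (Nat.div_mul_le_self x (2 ^ L)),
      sum_Ico_div_two_mul_two_mul, sum_Ico_div_two_pow_mul_two_pow f x L, sum_range_succ,
      add_comm]

/-- Dyadic decomposition of the rank: for `x < 2^L`, the number of items
strictly below `x`, counted with frequency `f`, equals the sum over levels `j < L` at which
`⌊x/2^j⌋` is odd of the total frequency of the dyadic block `{y : ⌊y/2^j⌋ = ⌊x/2^j⌋ - 1}`. -/
theorem stmt11 (L : ℕ) (f : ℕ → ℕ) (x : ℕ) (hx : x < 2 ^ L) :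
    ∑ y ∈ Finset.range x, f y =
      ∑ j ∈ Finset.range L,
        if Odd (x / 2 ^ j) then
          ∑ y ∈ (Finset.range (2 ^ L)).filter (fun y => y / 2 ^ j = x / 2 ^ j - 1), f y
        else 0 := by
  have hdecomp := sum_Ico_div_two_pow_mul_two_pow f x L
  rw [Nat.div_eq_of_lt hx, zero_mul, ← range_eq_Ico] at hdecomp
  rw [hdecomp]
  refine sum_congr rfl fun j _ => ?_
  split_ifs with hodd
  · have hblock : (x / 2 ^ j - 1 + 1) * 2 ^ j ≤ 2 ^ L := by
      rw [Nat.sub_add_cancel hodd.pos]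
      exact (Nat.div_mul_le_self x _).trans hx.le
    rw [Nat.filter_range_div_eq (Nat.two_pow_pos j) hblock, Nat.sub_add_cancel hodd.pos]
  · rfl
end

section
/- Let U, w ≥ 1, let f : Fin U → ℤ, and fix an item x ∈ Fin U. Let (H_y)_{y ∈ Fin U} be i.i.d. uniform random variables on Fin w and (G_y)_{y ∈ Fin U} be i.i.d. uniform random variables on {−1,+1}, the two families mutually independent. Define the single-row CountSketch estimator Z = G_x · Σ_{y ∈ Fin U} f(y)·G_y·1{H_y = H_x}. Then E[Z] = f(x) and Var(Z) = (Σ_{y ∈ Fin U, y ≠ x} f(y)²)/w. -/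
open MeasureTheory ProbabilityTheory Real
open scoped ENNReal NNReal

/-- Codomain of the combined family: hash values live in `Fin w`, sign values in `ℝ`. -/
def Codom (U w : ℕ) : Fin U ⊕ Fin U → Type
  | .inl _ => Fin w
  | .inr _ => ℝ

instance {U w : ℕ} (i : Fin U ⊕ Fin U) : MeasurableSpace (Codom U w i) :=
  match i with
  | .inl _ => inferInstanceAs (MeasurableSpace (Fin w))
  | .inr _ => inferInstanceAs (MeasurableSpace ℝ)

/-- The combined family of the hash variables and the sign variables. -/
def Vars {Ω : Type*} {U w : ℕ} (H : Fin U → Ω → Fin w) (G : Fin U → Ω → ℝ) :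
    ∀ i : Fin U ⊕ Fin U, Ω → Codom U w i
  | .inl y => H y
  | .inr y => G y

/-!
Write `Z = Σ_y f_y G_x G_y 1{H_y = H_x}`. Every product `G_y G_z φ(H)` with `y ≠ z` has mean
zero, because `G_y` is a centred sign independent of `(G_z, H)`. Hence only the diagonal
survives: `E Z = f_x E[G_x²] = f_x`, and, since `G_x² = 1`, also
`E Z² = Σ_y f_y² P(H_y = H_x) = f_x² + Σ_{y ≠ x} f_y² / w`, the collision probability of two
independent hashes, one of them uniform, being `1 / w`.
-/

open Finset

noncomputable def rademacherMeasure : Measure ℝ :=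
  (2 : ℝ≥0∞)⁻¹ • (Measure.dirac 1 + Measure.dirac (-1))

section Rademacher

variable {Ω : Type*} [MeasurableSpace Ω] {P : Measure Ω} {g : Ω → ℝ}

lemma ae_sq_eq_one_of_map_eq_rademacherMeasure (hg : Measurable g)
    (hlaw : P.map g = rademacherMeasure) : ∀ᵐ ω ∂P, g ω ^ 2 = 1 := by
  have hs : MeasurableSet {t : ℝ | t ^ 2 = 1} := measurableSet_eq_fun (by fun_prop) (by fun_prop)
  rw [← ae_map_iff hg.aemeasurable hs, hlaw, rademacherMeasure,
    Measure.ae_ennreal_smul_measure_iff (by simp), ae_add_measure_iff, ae_dirac_iff hs,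
    ae_dirac_iff hs]
  norm_num

lemma integral_eq_zero_of_map_eq_rademacherMeasure (hg : Measurable g)
    (hlaw : P.map g = rademacherMeasure) : ∫ ω, g ω ∂P = 0 := by
  rw [← integral_map (f := fun t : ℝ => t) hg.aemeasurable aestronglyMeasurable_id, hlaw,
    rademacherMeasure, integral_smul_measure,
    integral_add_measure (integrable_dirac (by simp)) (integrable_dirac (by simp))]
  simp

end Rademacher

section UniformHash

variable {Ω α : Type*} [MeasurableSpace Ω] {P : Measure Ω} [Fintype α] [MeasurableSpace α]
  [MeasurableSingletonClass α] {h h' : Ω → α}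

lemma measureReal_preimage_singleton_of_map_eq_uniform (hh : Measurable h)
    (hlaw : P.map h = (Fintype.card α : ℝ≥0∞)⁻¹ • Measure.count) (a : α) :
    P.real (h ⁻¹' {a}) = (Fintype.card α : ℝ)⁻¹ := by
  rw [measureReal_def, ← Measure.map_apply hh (measurableSet_singleton a), hlaw]
  simp

lemma integral_collision_eq_inv_card [DecidableEq α] [IsProbabilityMeasure P]
    (hh : Measurable h) (hh' : Measurable h') (hind : IndepFun h h' P)
    (hlaw : P.map h = (Fintype.card α : ℝ≥0∞)⁻¹ • Measure.count) :
    ∫ ω, (if h ω = h' ω then 1 else 0 : ℝ) ∂P = (Fintype.card α : ℝ)⁻¹ := by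
  have hfibers : {ω | h ω = h' ω} = ⋃ a, h ⁻¹' {a} ∩ h' ⁻¹' {a} := by
    ext; simp [eq_comm]
  calc ∫ ω, (if h ω = h' ω then 1 else 0 : ℝ) ∂P = P.real {ω | h ω = h' ω} := by
        rw [← integral_indicator_one (measurableSet_eq_fun hh hh')]
        simp [Set.indicator_apply]
    _ = ∑ a, P.real (h ⁻¹' {a}) * P.real (h' ⁻¹' {a}) := by
        rw [hfibers, measureReal_iUnion_fintype]
        · simp only [measureReal_def, hind.measure_inter_preimage_eq_mul _ _
            (measurableSet_singleton _) (measurableSet_singleton _), ENNReal.toReal_mul]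
        · exact fun a b hab => ((Set.disjoint_singleton.2 hab).preimage h).mono
            Set.inter_subset_left Set.inter_subset_left
        · exact fun a => (hh (measurableSet_singleton a)).inter (hh' (measurableSet_singleton a))
    _ = (Fintype.card α : ℝ)⁻¹ := by
        simp_rw [measureReal_preimage_singleton_of_map_eq_uniform hh hlaw, ← mul_sum]
        rw [sum_measureReal_preimage_singleton _ fun a _ => hh' (measurableSet_singleton a)]
        simp

end UniformHash

namespace CountSketch

variable {Ω : Type*} [MeasurableSpace Ω] {P : Measure Ω} {U w : ℕ}
  {H : Fin U → Ω → Fin w} {G : Fin U → Ω → ℝ}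

def collision (x y : Fin U) (h : Fin U → Fin w) : ℝ := if h y = h x then 1 else 0

def estimate (H : Fin U → Ω → Fin w) (G : Fin U → Ω → ℝ) (f : Fin U → ℝ) (x : Fin U)
    (ω : Ω) : ℝ :=
  G x ω * ∑ y, f y * G y ω * collision x y (fun u => H u ω)

lemma collision_self (x : Fin U) (h : Fin U → Fin w) : collision x x h = 1 := if_pos rfl

lemma collision_mul_self (x y : Fin U) (h : Fin U → Fin w) :
    collision x y h * collision x y h = collision x y h := by
  unfold collision; split_ifs <;> norm_num

lemma measurable_estimate (hmeas : ∀ i, Measurable (Vars H G i)) (f : Fin U → ℝ) (x : Fin U) :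
    Measurable (estimate H G f x) := by
  have hH : Measurable fun ω (u : Fin U) => H u ω :=
    measurable_pi_lambda _ fun u => hmeas (.inl u)
  have hG : ∀ y, Measurable (G y) := fun y => hmeas (.inr y)
  exact (hG x).mul (Finset.measurable_sum _ fun y _ =>
    ((hG y).const_mul (f y)).mul ((Measurable.of_discrete (f := collision x y)).comp hH))

lemma indepFun_sign_sign_hashes (hmeas : ∀ i, Measurable (Vars H G i))
    (hindep : iIndepFun (Vars H G) P) {y z : Fin U} (hyz : y ≠ z) :
    IndepFun (G y) (fun ω => (G z ω, fun u => H u ω)) P := by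
  classical
  let T : Finset (Fin U ⊕ Fin U) := univ.erase (.inr y)
  have hST : Disjoint {.inr y} T := by simp [T]
  have hsign : Measurable fun p : ∀ j : ({.inr y} : Finset (Fin U ⊕ Fin U)), Codom U w j =>
      (p ⟨.inr y, mem_singleton_self _⟩ : ℝ) :=
    measurable_pi_apply _
  have hrest : Measurable fun p : ∀ j : T, Codom U w j =>
      ((p ⟨.inr z, by simp [T, hyz.symm]⟩ : ℝ),
        fun u => (p ⟨.inl u, by simp [T]⟩ : Fin w)) :=
    (measurable_pi_apply _).prodMk (measurable_pi_lambda _ fun u => measurable_pi_apply _)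
  exact (hindep.indepFun_finset _ _ hST hmeas).comp hsign hrest

lemma integral_sign_mul_sign_mul_eq_zero (hmeas : ∀ i, Measurable (Vars H G i))
    (hindep : iIndepFun (Vars H G) P) {y z : Fin U} (hyz : y ≠ z)
    (hmean : ∫ ω, G y ω ∂P = 0) (ψ : (Fin U → Fin w) → ℝ) :
    ∫ ω, G y ω * (G z ω * ψ (fun u => H u ω)) ∂P = 0 := by
  have hGy : Measurable (G y) := hmeas (.inr y)
  have hψ : Measurable fun p : ℝ × (Fin U → Fin w) => p.1 * ψ p.2 :=
    measurable_fst.mul (Measurable.of_discrete.comp measurable_snd)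
  have hrest : Measurable fun ω => (G z ω, fun u => H u ω) :=
    (hmeas (.inr z)).prodMk (measurable_pi_lambda _ fun u => hmeas (.inl u))
  have hfactor := ((indepFun_sign_sign_hashes hmeas hindep hyz).comp measurable_id hψ
    ).integral_fun_mul_eq_mul_integral hGy.aestronglyMeasurable
      (hψ.comp hrest).aestronglyMeasurable
  simpa [hmean] using hfactor

lemma integrable_sign_mul_sign_mul [IsFiniteMeasure P] (hmeas : ∀ i, Measurable (Vars H G i))
    (hGsq : ∀ y, ∀ᵐ ω ∂P, G y ω ^ 2 = 1) (y z : Fin U) (ψ : (Fin U → Fin w) → ℝ) :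
    Integrable (fun ω => G y ω * (G z ω * ψ (fun u => H u ω))) P := by
  have hGy : Measurable (G y) := hmeas (.inr y)
  have hGz : Measurable (G z) := hmeas (.inr z)
  have hψ : Measurable fun ω => ψ (fun u => H u ω) :=
    Measurable.of_discrete.comp (measurable_pi_lambda _ fun u => hmeas (.inl u))
  refine Integrable.of_bound (hGy.mul (hGz.mul hψ)).aestronglyMeasurable (∑ h, ‖ψ h‖) ?_
  filter_upwards [hGsq y, hGsq z] with ω hy hz
  have hψle : ‖ψ (fun u => H u ω)‖ ≤ ∑ h, ‖ψ h‖ :=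
    single_le_sum (fun h _ => norm_nonneg (ψ h)) (mem_univ _)
  have habs : ∀ t : ℝ, t ^ 2 = 1 → |t| = 1 := fun t ht => by
    simpa using (sq_eq_sq_iff_abs_eq_abs t 1).1 (by rw [ht, one_pow])
  rw [norm_mul, norm_mul, Real.norm_eq_abs, Real.norm_eq_abs, habs _ hy, habs _ hz]
  simpa using hψle

lemma integral_sign_mul_sign_mul_collision [IsProbabilityMeasure P]
    (hmeas : ∀ i, Measurable (Vars H G i)) (hindep : iIndepFun (Vars H G) P)
    (hGsq : ∀ y, ∀ᵐ ω ∂P, G y ω ^ 2 = 1) (hmean : ∀ y, ∫ ω, G y ω ∂P = 0)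
    (x y : Fin U) :
    ∫ ω, G x ω * (G y ω * collision x y (fun u => H u ω)) ∂P = if y = x then 1 else 0 := by
  split_ifs with hyx
  · subst hyx
    have hone : (fun ω => G y ω * (G y ω * collision y y (fun u => H u ω))) =ᵐ[P] 1 := by
      filter_upwards [hGsq y] with ω hω
      rw [collision_self, mul_one, ← sq, hω, Pi.one_apply]
    simp [integral_congr_ae hone]
  · exact integral_sign_mul_sign_mul_eq_zero hmeas hindep (Ne.symm hyx) (hmean x) _

lemma integral_sign_mul_sign_mul_collision_mul_collision [IsProbabilityMeasure P]
    (hmeas : ∀ i, Measurable (Vars H G i)) (hindep : iIndepFun (Vars H G) P)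
    (hGsq : ∀ y, ∀ᵐ ω ∂P, G y ω ^ 2 = 1) (hmean : ∀ y, ∫ ω, G y ω ∂P = 0)
    {x : Fin U} (hcoll : ∀ y ≠ x, ∫ ω, collision x y (fun u => H u ω) ∂P = (w : ℝ)⁻¹)
    (y z : Fin U) :
    ∫ ω, G y ω * (G z ω *
        (collision x y (fun u => H u ω) * collision x z (fun u => H u ω))) ∂P
      = if z = y then (if y = x then 1 else (w : ℝ)⁻¹) else 0 := by
  by_cases hzy : z = y
  · subst hzy
    have hreduce : (fun ω => G z ω * (G z ω *
        (collision x z (fun u => H u ω) * collision x z (fun u => H u ω))))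
        =ᵐ[P] fun ω => collision x z (fun u => H u ω) := by
      filter_upwards [hGsq z] with ω hω
      rw [collision_mul_self, ← mul_assoc, ← sq, hω, one_mul]
    rw [integral_congr_ae hreduce, if_pos rfl]
    by_cases hzx : z = x
    · simp [hzx, collision_self]
    · rw [if_neg hzx, hcoll z hzx]
  · rw [if_neg hzy]
    exact integral_sign_mul_sign_mul_eq_zero hmeas hindep (Ne.symm hzy) (hmean y)
      (fun h => collision x y h * collision x z h)

lemma integral_estimate [IsProbabilityMeasure P]
    (hmeas : ∀ i, Measurable (Vars H G i)) (hindep : iIndepFun (Vars H G) P)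
    (hGsq : ∀ y, ∀ᵐ ω ∂P, G y ω ^ 2 = 1) (hmean : ∀ y, ∫ ω, G y ω ∂P = 0)
    (f : Fin U → ℝ) (x : Fin U) :
    ∫ ω, estimate H G f x ω ∂P = f x := by
  calc ∫ ω, estimate H G f x ω ∂P
      = ∫ ω, ∑ y, f y * (G x ω * (G y ω * collision x y (fun u => H u ω))) ∂P := by
        congr 1; funext ω
        rw [estimate, mul_sum]
        exact sum_congr rfl fun y _ => by ring
    _ = ∑ y, f y * ∫ ω, G x ω * (G y ω * collision x y (fun u => H u ω)) ∂P := by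
        rw [integral_finsetSum _ fun y _ =>
          (integrable_sign_mul_sign_mul hmeas hGsq x y _).const_mul (f y)]
        simp_rw [integral_const_mul]
    _ = f x := by simp [integral_sign_mul_sign_mul_collision hmeas hindep hGsq hmean]

lemma variance_estimate [IsProbabilityMeasure P]
    (hmeas : ∀ i, Measurable (Vars H G i)) (hindep : iIndepFun (Vars H G) P)
    (hGsq : ∀ y, ∀ᵐ ω ∂P, G y ω ^ 2 = 1) (hmean : ∀ y, ∫ ω, G y ω ∂P = 0)
    (f : Fin U → ℝ) (x : Fin U)
    (hcoll : ∀ y ≠ x, ∫ ω, collision x y (fun u => H u ω) ∂P = (w : ℝ)⁻¹) :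
    variance (estimate H G f x) P = (∑ y ∈ univ.erase x, f y ^ 2) / w := by
  let term (y z : Fin U) (ω : Ω) : ℝ :=
    G y ω * (G z ω * (collision x y (fun u => H u ω) * collision x z (fun u => H u ω)))
  have hexpand : (fun ω => estimate H G f x ω ^ 2)
      =ᵐ[P] fun ω => ∑ y, ∑ z, f y * f z * term y z ω := by
    filter_upwards [hGsq x] with ω hω
    rw [estimate, mul_pow, hω, one_mul, sq, sum_mul_sum]
    exact sum_congr rfl fun y _ => sum_congr rfl fun z _ => by ring
  have hint (y z : Fin U) : Integrable (fun ω => f y * f z * term y z ω) P :=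
    (integrable_sign_mul_sign_mul hmeas hGsq y z
      (fun h => collision x y h * collision x z h)).const_mul _
  have hmem : MemLp (estimate H G f x) 2 P :=
    (memLp_two_iff_integrable_sq (measurable_estimate hmeas f x).aestronglyMeasurable).2
      ((integrable_finsetSum _ fun y _ => integrable_finsetSum _ fun z _ => hint y z).congr
        hexpand.symm)
  rw [variance_eq_sub hmem, integral_estimate hmeas hindep hGsq hmean, Pi.pow_def,
    integral_congr_ae hexpand,
    integral_finsetSum _ fun y _ => integrable_finsetSum _ fun z _ => hint y z]
  simp_rw [integral_finsetSum _ fun z _ => hint _ z, integral_const_mul, term,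
    integral_sign_mul_sign_mul_collision_mul_collision hmeas hindep hGsq hmean hcoll]
  simp only [mul_ite, mul_zero, mul_one, sum_ite_eq', mem_univ, if_true]
  rw [← add_sum_erase _ _ (mem_univ x), if_pos rfl, sum_div,
    sum_congr rfl fun y hy => if_neg (ne_of_mem_erase hy)]
  simp only [← sq, div_eq_mul_inv, add_sub_cancel_left]

end CountSketch

theorem stmt13_general {Ω : Type*} [MeasurableSpace Ω] (P : Measure Ω) [IsProbabilityMeasure P]
    (U w : ℕ)
    (f : Fin U → ℤ) (x : Fin U)
    (H : Fin U → Ω → Fin w) (G : Fin U → Ω → ℝ)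
    (hmeas : ∀ i : Fin U ⊕ Fin U, Measurable (Vars H G i))
    (hindep : iIndepFun (Vars H G) P)
    (hdistH : ∀ y, Measure.map (H y) P = (w : ℝ≥0∞)⁻¹ • Measure.count)
    (hdistG : ∀ y, Measure.map (G y) P
      = (2 : ℝ≥0∞)⁻¹ • (Measure.dirac (1 : ℝ) + Measure.dirac (-1 : ℝ)))
    (Z : Ω → ℝ)
    (hZ : ∀ ω, Z ω = G x ω * ∑ y : Fin U, (f y : ℝ) * G y ω
      * (if H y ω = H x ω then 1 else 0)) :
    ∫ ω, Z ω ∂P = (f x : ℝ) ∧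
      variance Z P = (∑ y ∈ Finset.univ.erase x, (f y : ℝ) ^ 2) / w := by
  have hH y : Measurable (H y) := hmeas (.inl y)
  have hG y : Measurable (G y) := hmeas (.inr y)
  have hGsq y := ae_sq_eq_one_of_map_eq_rademacherMeasure (hG y) (hdistG y)
  have hmean y := integral_eq_zero_of_map_eq_rademacherMeasure (hG y) (hdistG y)
  have hcoll (y) (hyx : y ≠ x) :
      ∫ ω, CountSketch.collision x y (fun u => H u ω) ∂P = (w : ℝ)⁻¹ := by
    have hlaw : P.map (H y) = (Fintype.card (Fin w) : ℝ≥0∞)⁻¹ • Measure.count := by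
      rw [Fintype.card_fin, hdistH y]
    simpa [CountSketch.collision] using integral_collision_eq_inv_card (hH y) (hH x)
      (hindep.indepFun (i := .inl y) (j := .inl x) (by simpa using hyx)) hlaw
  obtain rfl : Z = CountSketch.estimate H G (fun y => (f y : ℝ)) x := funext hZ
  exact ⟨CountSketch.integral_estimate hmeas hindep hGsq hmean _ x,
    CountSketch.variance_estimate hmeas hindep hGsq hmean _ x hcoll⟩

/-- The single-row CountSketch estimator
`Z = G_x · Σ_y f(y)·G_y·1{H_y = H_x}`, with i.i.d. uniform hashes on `Fin w` and i.i.d.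
uniform signs on `{-1,+1}`, mutually independent, satisfies `E[Z] = f(x)` and
`Var(Z) = (Σ_{y ≠ x} f(y)²)/w`. -/
theorem stmt13 {Ω : Type*} [MeasurableSpace Ω] (P : Measure Ω) [IsProbabilityMeasure P]
    (U w : ℕ) (hU : 1 ≤ U) (hw : 1 ≤ w)
    (f : Fin U → ℤ) (x : Fin U)
    (H : Fin U → Ω → Fin w) (G : Fin U → Ω → ℝ)
    (hmeas : ∀ i : Fin U ⊕ Fin U, Measurable (Vars H G i))
    (hindep : iIndepFun (Vars H G) P)
    (hdistH : ∀ y, Measure.map (H y) P = (w : ℝ≥0∞)⁻¹ • Measure.count)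
    (hdistG : ∀ y, Measure.map (G y) P
      = (2 : ℝ≥0∞)⁻¹ • (Measure.dirac (1 : ℝ) + Measure.dirac (-1 : ℝ)))
    (Z : Ω → ℝ)
    (hZ : ∀ ω, Z ω = G x ω * ∑ y : Fin U, (f y : ℝ) * G y ω
      * (if H y ω = H x ω then 1 else 0)) :
    ∫ ω, Z ω ∂P = (f x : ℝ) ∧
      variance Z P = (∑ y ∈ Finset.univ.erase x, (f y : ℝ) ^ 2) / w :=
  stmt13_general P U w f x H G hmeas hindep hdistH hdistG Z hZ
end

section
/- Let d, w, U ≥ 1, let f : Fin U → ℕ be a frequency function with total count N = Σ_{y} f(y) ≥ 1, fix an item x ∈ Fin U and γ > 0. Let (H_r(y))_{r ∈ Fin d, y ∈ Fin U} be i.i.d. uniform random variables on Fin w. Then the probability that every row overestimates by at least γN — i.e., P( for all r ∈ Fin d, Σ_{y ≠ x : H_r(y) = H_r(x)} f(y) ≥ γ·N ) — is at most (1/(γ·w))^d. Equivalently, the d-row Count-Min estimate f̃(x) = min_r Σ_{y : H_r(y) = H_r(x)} f(y) satisfies P( f̃(x) − f(x) ≥ γN ) ≤ (γw)^{−d}.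 -/
/-!
For `y ≠ x` the hash `H_r(x)` is independent of the uniform `H_r(y)`, so the two collide with
probability exactly `1/w`. Hence the excess in row `r` has mean at most `N/w`, and Markov's
inequality bounds the probability that it reaches `γN` by `1/(γw)`. The rows are functions of
disjoint blocks of the independent family `H`, so they are independent and these `d` bounds
multiply.
-/

open MeasureTheory ProbabilityTheory Finset
open scoped ENNReal

namespace ProbabilityTheory

variable {Ω : Type*} [MeasurableSpace Ω] {P : Measure Ω}

theorem iIndepFun.curry {ι κ β : Type*} [MeasurableSpace β] {X : ι × κ → Ω → β}
    (hX : ∀ p, Measurable (X p)) (h : iIndepFun X P) :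
    iIndepFun (fun i ω j ↦ X (i, j) ω) P := by
  have := h.isProbabilityMeasure
  have := fun p ↦ Measure.isProbabilityMeasure_map (μ := P) (hX p).aemeasurable
  have hrow (i : ι) :
      P.map (fun ω j ↦ X (i, j) ω) = Measure.infinitePi fun j ↦ P.map (X (i, j)) :=
    (iIndepFun_iff_map_fun_eq_infinitePi_map fun j ↦ hX (i, j)).1
      (h.precomp (Prod.mk_right_injective i))
  rw [iIndepFun_iff_map_fun_eq_infinitePi_map fun i ↦ measurable_pi_lambda _ fun j ↦ hX (i, j)]
  simp_rw [hrow]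
  rw [← Measure.infinitePi_map_curry fun i j ↦ P.map (X (i, j)),
    ← (iIndepFun_iff_map_fun_eq_infinitePi_map hX).1 h,
    Measure.map_map (by fun_prop) (by fun_prop)]
  rfl

theorem measure_collision_eq_inv_card [IsProbabilityMeasure P] {α : Type*} [Fintype α]
    [MeasurableSpace α] [MeasurableSingletonClass α] {X Y : Ω → α}
    (hX : Measurable X) (hY : Measurable Y)
    (hXY : IndepFun X Y P) (hunif : P.map X = (Fintype.card α : ℝ≥0∞)⁻¹ • Measure.count) :
    P {ω | X ω = Y ω} = (Fintype.card α : ℝ≥0∞)⁻¹ := by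
  have hXk (k : α) : P (X ⁻¹' {k}) = (Fintype.card α : ℝ≥0∞)⁻¹ := by
    rw [← Measure.map_apply hX (measurableSet_singleton k), hunif]
    simp
  have hfibers : {ω | X ω = Y ω} = ⋃ k, X ⁻¹' {k} ∩ Y ⁻¹' {k} := by
    ext ω; simp [eq_comm]
  calc P {ω | X ω = Y ω} = ∑ k, P (X ⁻¹' {k} ∩ Y ⁻¹' {k}) := by
        rw [hfibers, measure_iUnion, tsum_fintype]
        · intro k l hkl
          exact ((Set.disjoint_singleton.2 hkl).preimage X).inter_left _ |>.inter_right _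
        · exact fun k ↦ (hX (measurableSet_singleton k)).inter (hY (measurableSet_singleton k))
    _ = (Fintype.card α : ℝ≥0∞)⁻¹ * ∑ k, P (Y ⁻¹' {k}) := by
        simp_rw [hXY.measure_inter_preimage_eq_mul _ _ (measurableSet_singleton _)
          (measurableSet_singleton _), hXk, mul_sum]
    _ = (Fintype.card α : ℝ≥0∞)⁻¹ := by
        rw [sum_measure_preimage_singleton _ fun k _ ↦ hY (measurableSet_singleton k)]
        simp

theorem measure_weighted_collisions_ge_le [IsProbabilityMeasure P] {β α : Type*} [Fintype α]
    [DecidableEq α] [MeasurableSpace α] [MeasurableSingletonClass α] {h : β → Ω → α}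
    (hmeas : ∀ y, Measurable (h y)) (x : β) {s : Finset β}
    (hindep : ∀ y ∈ s, IndepFun (h y) (h x) P)
    (hunif : ∀ y ∈ s, P.map (h y) = (Fintype.card α : ℝ≥0∞)⁻¹ • Measure.count)
    (a : β → ℝ) (ha : ∀ y ∈ s, 0 ≤ a y) {t : ℝ} (ht : 0 < t) :
    P {ω | t ≤ ∑ y ∈ s, a y * if h y ω = h x ω then 1 else 0}
      ≤ ENNReal.ofReal ((∑ y ∈ s, a y) / (t * Fintype.card α)) := by
  set E : β → Set Ω := fun y ↦ {ω | h y ω = h x ω}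
  set g : Ω → ℝ := fun ω ↦ ∑ y ∈ s, a y * (E y).indicator 1 ω
  have hE (y : β) : MeasurableSet (E y) := measurableSet_eq_fun (hmeas y) (hmeas x)
  have hg : {ω | t ≤ ∑ y ∈ s, a y * if h y ω = h x ω then 1 else 0} = {ω | t ≤ g ω} := by
    simp [g, E, Set.indicator_apply]
  have hterm_int (y : β) : Integrable (fun ω ↦ a y * (E y).indicator 1 ω) P :=
    ((integrable_const 1).indicator (hE y)).const_mul (a y)
  have hg_nonneg : 0 ≤ᵐ[P] g := .of_forall fun ω ↦
    sum_nonneg fun y hy ↦ mul_nonneg (ha y hy) (Set.indicator_nonneg (fun _ _ ↦ zero_le_one) ω)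
  have hmean : ∫ ω, g ω ∂P = (∑ y ∈ s, a y) / Fintype.card α := by
    rw [integral_finsetSum _ fun y _ ↦ hterm_int y, sum_div]
    refine sum_congr rfl fun y hy ↦ ?_
    rw [integral_const_mul, integral_indicator_one (hE y), measureReal_def,
      measure_collision_eq_inv_card (hmeas y) (hmeas x) (hindep y hy) (hunif y hy)]
    simp [div_eq_mul_inv]
  rw [hg, ← ofReal_measureReal]
  refine ENNReal.ofReal_le_ofReal ?_
  rw [mul_comm t, ← div_div, le_div_iff₀ ht, mul_comm, ← hmean]
  exact mul_meas_ge_le_integral_of_nonneg hg_nonneg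
    (integrable_finsetSum _ fun y _ ↦ hterm_int y) t

end ProbabilityTheory

theorem stmt14_general {Ω : Type*} [MeasurableSpace Ω] (P : Measure Ω) [IsProbabilityMeasure P]
    (d w U : ℕ)
    (f : Fin U → ℕ) (N : ℕ) (hN : N = ∑ y : Fin U, f y) (hN1 : 1 ≤ N)
    (x : Fin U) (γ : ℝ) (hγ : 0 < γ)
    (H : Fin d × Fin U → Ω → Fin w)
    (hmeas : ∀ p, Measurable (H p))
    (hindep : iIndepFun H P)
    (hdist : ∀ p, Measure.map (H p) P = (w : ℝ≥0∞)⁻¹ • Measure.count) :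
    P {ω | ∀ r : Fin d,
        γ * N ≤ ∑ y ∈ Finset.univ.erase x,
          (f y : ℝ) * (if H (r, y) ω = H (r, x) ω then 1 else 0)}
      ≤ ENNReal.ofReal ((1 / (γ * w)) ^ d) := by
  set A : Fin d → Set Ω := fun r ↦ {ω | γ * N ≤ ∑ y ∈ univ.erase x,
    (f y : ℝ) * (if H (r, y) ω = H (r, x) ω then 1 else 0)}
  have hrow (r : Fin d) : P (A r) ≤ ENNReal.ofReal (1 / (γ * w)) := by
    refine (measure_weighted_collisions_ge_le (h := fun y ↦ H (r, y)) (fun y ↦ hmeas _) x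
      (fun y hy ↦ hindep.indepFun (by simpa using (mem_erase.1 hy).1))
      (fun y _ ↦ by simpa using hdist (r, y)) (fun y ↦ (f y : ℝ)) (fun _ _ ↦ by positivity)
      (by positivity)).trans (ENNReal.ofReal_le_ofReal ?_)
    have hN0 : (N : ℝ) ≠ 0 := by positivity
    have hsum : ∑ y ∈ univ.erase x, (f y : ℝ) ≤ N := by
      rw [hN]; push_cast; exact sum_le_sum_of_subset_of_nonneg (erase_subset _ _) (by simp)
    calc (∑ y ∈ univ.erase x, (f y : ℝ)) / (γ * N * Fintype.card (Fin w))
        ≤ N / (γ * N * w) := by simp only [Fintype.card_fin]; gcongr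
      _ = 1 / (γ * w) := by field_simp
  rw [Set.ofPred_forall, (hindep.curry hmeas).meas_iInter (s := A) fun r ↦ ⟨{v | γ * N ≤
    ∑ y ∈ univ.erase x, (f y : ℝ) * (if v y = v x then 1 else 0)},
    (Set.to_countable _).measurableSet, rfl⟩]
  calc ∏ r, P (A r) ≤ ENNReal.ofReal (1 / (γ * w)) ^ (univ : Finset (Fin d)).card :=
        prod_le_pow_card _ _ _ fun r _ ↦ hrow r
    _ = ENNReal.ofReal ((1 / (γ * w)) ^ d) := by
        rw [card_univ, Fintype.card_fin, ENNReal.ofReal_pow (by positivity)]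

/-- For a `d`-row Count-Min sketch with `w` columns under fully random
i.i.d. hashing, the probability that every row overestimates `f(x)` by at least `γ·N` is at
most `(1/(γw))^d`; equivalently `P(f̃(x) - f(x) ≥ γN) ≤ (γw)^{-d}`. -/
theorem stmt14 {Ω : Type*} [MeasurableSpace Ω] (P : Measure Ω) [IsProbabilityMeasure P]
    (d w U : ℕ) (hd : 1 ≤ d) (hw : 1 ≤ w) (hU : 1 ≤ U)
    (f : Fin U → ℕ) (N : ℕ) (hN : N = ∑ y : Fin U, f y) (hN1 : 1 ≤ N)
    (x : Fin U) (γ : ℝ) (hγ : 0 < γ)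
    (H : Fin d × Fin U → Ω → Fin w)
    (hmeas : ∀ p, Measurable (H p))
    (hindep : iIndepFun H P)
    (hdist : ∀ p, Measure.map (H p) P = (w : ℝ≥0∞)⁻¹ • Measure.count) :
    P {ω | ∀ r : Fin d,
        γ * N ≤ ∑ y ∈ Finset.univ.erase x,
          (f y : ℝ) * (if H (r, y) ω = H (r, x) ω then 1 else 0)}
      ≤ ENNReal.ofReal ((1 / (γ * w)) ^ d) :=
  stmt14_general P d w U f N hN hN1 x γ hγ H hmeas hindep hdist
end
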